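/- arXiv:1409.0793 — 8 statements merged into one kernel-verified Lean document; each statement's English description precedes it below -/
import Mathlib

section
/- For every integer k ≥ 1 and every complex number t, ∑_{ℓ=0}^{2k−2} c_ℓ · (1−t)^{2k−2−ℓ} · t^ℓ = −t^{k−1}, where c_ℓ := ∑_{j=1}^{k} (−1)^j · C(2k−1−j, ℓ) · C(k−1, j−1). -/
lemma stmt8_inner (k j : ℕ) (hj1 : 1 ≤ j) (hj2 : j ≤ k) (t : ℂ) :
    ∑ ℓ ∈ Finset.range (2 * k - 1),
        ((2 * k - 1 - j).choose ℓ : ℂ) * (1 - t) ^ (2 * k - 2 - ℓ) * t ^ ℓ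
      = (1 - t) ^ (j - 1) := by
  set m := 2 * k - 1 - j with hm
  have hsub : Finset.range (m + 1) ⊆ Finset.range (2 * k - 1) :=
    Finset.range_subset_range.mpr (by omega)
  rw [← Finset.sum_subset hsub (by
    intro x hx hx2
    simp only [Finset.mem_range] at hx hx2
    rw [Nat.choose_eq_zero_of_lt (by omega)]
    push_cast
    ring)]
  have key : ∀ ℓ ∈ Finset.range (m + 1),
      ((m.choose ℓ : ℂ)) * (1 - t) ^ (2 * k - 2 - ℓ) * t ^ ℓ
        = (t ^ ℓ * (1 - t) ^ (m - ℓ) * (m.choose ℓ : ℂ)) * (1 - t) ^ (j - 1) := by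
    intro ℓ hℓ
    simp only [Finset.mem_range] at hℓ
    have : 2 * k - 2 - ℓ = (m - ℓ) + (j - 1) := by omega
    rw [this, pow_add]
    ring
  rw [Finset.sum_congr rfl key, ← Finset.sum_mul]
  have := add_pow t (1 - t) m
  rw [show t + (1 - t) = 1 by ring, one_pow] at this
  rw [← this, one_mul]

/-- For every integer `k ≥ 1` and complex `t`,
`∑_{ℓ=0}^{2k−2} c_ℓ (1−t)^{2k−2−ℓ} t^ℓ = −t^{k−1}`, where
`c_ℓ = ∑_{j=1}^{k} (−1)^j C(2k−1−j, ℓ) C(k−1, j−1)`. -/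
theorem stmt_8 (k : ℕ) (hk : 1 ≤ k) (t : ℂ) :
    ∑ ℓ ∈ Finset.range (2 * k - 1),
        (∑ j ∈ Finset.Icc 1 k,
            (-1 : ℂ) ^ j * ((2 * k - 1 - j).choose ℓ : ℂ) * ((k - 1).choose (j - 1) : ℂ))
          * (1 - t) ^ (2 * k - 2 - ℓ) * t ^ ℓ
      = -t ^ (k - 1) := by
  simp_rw [Finset.sum_mul]
  rw [Finset.sum_comm]
  have step : ∀ j ∈ Finset.Icc 1 k,
      ∑ ℓ ∈ Finset.range (2 * k - 1),
        (-1 : ℂ) ^ j * ((2 * k - 1 - j).choose ℓ : ℂ) * ((k - 1).choose (j - 1) : ℂ)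
          * (1 - t) ^ (2 * k - 2 - ℓ) * t ^ ℓ
        = (-1 : ℂ) ^ j * ((k - 1).choose (j - 1) : ℂ) * (1 - t) ^ (j - 1) := by
    intro j hj
    simp only [Finset.mem_Icc] at hj
    have := stmt8_inner k j hj.1 hj.2 t
    calc ∑ ℓ ∈ Finset.range (2 * k - 1),
        (-1 : ℂ) ^ j * ((2 * k - 1 - j).choose ℓ : ℂ) * ((k - 1).choose (j - 1) : ℂ)
          * (1 - t) ^ (2 * k - 2 - ℓ) * t ^ ℓ
        = ((-1 : ℂ) ^ j * ((k - 1).choose (j - 1) : ℂ)) *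
          ∑ ℓ ∈ Finset.range (2 * k - 1),
            ((2 * k - 1 - j).choose ℓ : ℂ) * (1 - t) ^ (2 * k - 2 - ℓ) * t ^ ℓ := by
          rw [Finset.mul_sum]; exact Finset.sum_congr rfl fun ℓ _ => by ring
      _ = (-1 : ℂ) ^ j * ((k - 1).choose (j - 1) : ℂ) * (1 - t) ^ (j - 1) := by
          rw [this]
  rw [Finset.sum_congr rfl step]
  rw [← Finset.Ico_add_one_right_eq_Icc, Finset.sum_Ico_eq_sum_range]
  have : ∀ i ∈ Finset.range (k + 1 - 1),
      (-1 : ℂ) ^ (1 + i) * ((k - 1).choose (1 + i - 1) : ℂ) * (1 - t) ^ (1 + i - 1)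
        = -((t - 1) ^ i * (1 : ℂ) ^ (k - 1 - i) * ((k - 1).choose i : ℂ)) := by
    intro i hi
    have h1 : 1 + i - 1 = i := by omega
    rw [h1, pow_add, pow_one, one_pow,
      show ((t - 1) : ℂ) ^ i = (-1) ^ i * (1 - t) ^ i by rw [← mul_pow]; ring_nf]
    ring
  rw [Finset.sum_congr rfl this, Finset.sum_neg_distrib]
  have ap := add_pow (t - 1) (1 : ℂ) (k - 1)
  rw [show (t - 1 + 1 : ℂ) = t by ring] at ap
  rw [show k + 1 - 1 = (k - 1) + 1 by omega, ← ap]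
end

section
/- Let k ≥ 1 be an integer, ℓ an integer, and 0 < R < 1 a real number. Define the incomplete beta function β(y; a, b) := ∫₀^y t^{a−1}(1−t)^{b−1} dt and set β₀(y; 2k−1, −ℓ) := β(y; 2k−1, −ℓ) − ∑_{0 ≤ j ≤ 2k−2, j ≠ ℓ} C(2k−2, j)·(−1)^j/(j−ℓ). Then β₀(1−R²; 2k−1, −ℓ) = ∑_{0 ≤ j ≤ 2k−2, j ≠ ℓ} C(2k−2, j)·((−1)^{j+1}/(j−ℓ))·R^{2(j−ℓ)} + [0 ≤ ℓ ≤ 2k−2]·(−1)^{ℓ+1}·C(2k−2, ℓ)·log(R²), where [P] is 1 if P holds and 0 otherwise. -/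
/-- For an integer `k ≥ 1`, an integer `ℓ` and a real `0 < R < 1`, with
`β(y; 2k−1, −ℓ) = ∫₀^y t^{2k−2}(1−t)^{−ℓ−1} dt` and
`β₀(y; 2k−1, −ℓ) = β(y; 2k−1, −ℓ) − ∑_{0 ≤ j ≤ 2k−2, j ≠ ℓ} C(2k−2,j)(−1)^j/(j−ℓ)`, one has
`β₀(1−R²; 2k−1, −ℓ) = ∑_{0 ≤ j ≤ 2k−2, j ≠ ℓ} C(2k−2,j)((−1)^{j+1}/(j−ℓ))R^{2(j−ℓ)}
  + [0 ≤ ℓ ≤ 2k−2](−1)^{ℓ+1}C(2k−2,ℓ)log(R²)`. -/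
theorem stmt_9 (k : ℕ) (hk : 1 ≤ k) (ℓ : ℤ) (R : ℝ) (hR0 : 0 < R) (hR1 : R < 1) :
    (∫ t in (0:ℝ)..(1 - R ^ 2), t ^ (2 * k - 2) * (1 - t) ^ (-ℓ - 1))
        - ∑ j ∈ Finset.range (2 * k - 1),
            (if (j : ℤ) ≠ ℓ then ((2 * k - 2).choose j : ℝ) * (-1) ^ j / ((j : ℝ) - (ℓ : ℝ))
             else 0)
      = (∑ j ∈ Finset.range (2 * k - 1),
            (if (j : ℤ) ≠ ℓ then
                ((2 * k - 2).choose j : ℝ) * ((-1) ^ (j + 1) / ((j : ℝ) - (ℓ : ℝ)))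
                  * R ^ (2 * ((j : ℤ) - ℓ))
             else 0))
        + (if 0 ≤ ℓ ∧ ℓ ≤ 2 * (k : ℤ) - 2 then
              (-1 : ℝ) ^ (ℓ + 1) * ((2 * k - 2).choose ℓ.toNat : ℝ)
           else 0) * Real.log (R ^ 2) := by
  have hR2 : (0:ℝ) < R ^ 2 := by positivity
  have hR2lt : R ^ 2 < 1 := by nlinarith
  set n : ℕ := 2 * k - 2 with hn
  have hrange : 2 * k - 1 = n + 1 := by omega
  have hcastn : 2 * (k : ℤ) - 2 = (n : ℤ) := by simp [hn]; omega
  rw [hrange, hcastn]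
  -- key integral computation
  have h0 : (0:ℝ) ∉ Set.uIcc (R ^ 2) 1 := by
    rw [Set.uIcc_of_le hR2lt.le]
    rintro ⟨h1, h2⟩; nlinarith
  have key : ∀ m : ℤ, (∫ t in (0:ℝ)..(1 - R ^ 2), (1 - t) ^ m)
      = if m = -1 then - Real.log (R ^ 2)
        else (1 - (R ^ 2) ^ (m + 1)) / ((m : ℝ) + 1) := by
    intro m
    have h1 : (∫ t in (0:ℝ)..(1 - R ^ 2), (1 - t) ^ m)
        = ∫ u in (R ^ 2)..(1:ℝ), u ^ m := by
      have := intervalIntegral.integral_comp_sub_left (a := 0) (b := 1 - R ^ 2)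
        (fun u : ℝ => u ^ m) 1
      simpa using this
    by_cases hm : m = -1
    · subst hm
      rw [if_pos rfl, h1]
      simp only [zpow_neg_one]
      rw [integral_inv h0, Real.log_div one_ne_zero (ne_of_gt hR2)]
      simp
    · rw [if_neg hm, h1, integral_zpow (Or.inr ⟨hm, h0⟩)]
      simp
  -- expand the integrand
  have hIcc : Set.uIcc (0:ℝ) (1 - R ^ 2) = Set.Icc 0 (1 - R ^ 2) :=
    Set.uIcc_of_le (by nlinarith)
  have hne : ∀ t ∈ Set.uIcc (0:ℝ) (1 - R ^ 2), (1:ℝ) - t ≠ 0 := by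
    intro t ht
    rw [hIcc] at ht
    have := ht.2
    nlinarith
  have expand : Set.EqOn (fun t : ℝ => t ^ n * (1 - t) ^ (-ℓ - 1))
      (fun t : ℝ => ∑ j ∈ Finset.range (n + 1),
        (n.choose j : ℝ) * (-1) ^ j * (1 - t) ^ ((j : ℤ) - ℓ - 1))
      (Set.uIcc (0:ℝ) (1 - R ^ 2)) := by
    intro t ht
    have ht' := hne t ht
    have hbin : (t : ℝ) ^ n
        = ∑ j ∈ Finset.range (n + 1), (-1:ℝ) ^ j * (1 - t) ^ j * (n.choose j) := by
      calc t ^ n = ((-(1 - t)) + 1) ^ n := by ring_nf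
      _ = _ := by
          rw [add_pow]
          refine Finset.sum_congr rfl fun j hj => ?_
          rw [neg_pow]; ring
    show t ^ n * (1 - t) ^ (-ℓ - 1) = _
    rw [hbin, Finset.sum_mul]
    refine Finset.sum_congr rfl fun j hj => ?_
    have hsplit : ((j : ℤ) - ℓ - 1) = (j : ℤ) + (-ℓ - 1) := by ring
    rw [hsplit, zpow_add₀ ht', zpow_natCast]
    ring
  have hInt : ∀ j ∈ Finset.range (n + 1),
      IntervalIntegrable
        (fun t : ℝ => (n.choose j : ℝ) * (-1) ^ j * (1 - t) ^ ((j : ℤ) - ℓ - 1))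
        MeasureTheory.volume 0 (1 - R ^ 2) := by
    intro j hj
    apply ContinuousOn.intervalIntegrable
    exact continuousOn_const.mul
      (((continuousOn_const.sub continuousOn_id).zpow₀ _ )
        (fun t ht => Or.inl (hne t ht)))
  rw [intervalIntegral.integral_congr expand,
    intervalIntegral.integral_finset_sum hInt]
  simp only [intervalIntegral.integral_const_mul, key]
  -- turn the log term into a sum
  have hL : (if 0 ≤ ℓ ∧ ℓ ≤ (n : ℤ) then
        (-1 : ℝ) ^ (ℓ + 1) * (n.choose ℓ.toNat : ℝ) else 0) * Real.log (R ^ 2)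
      = ∑ j ∈ Finset.range (n + 1),
          (if (j : ℤ) = ℓ then (-1:ℝ) ^ (j + 1) * (n.choose j : ℝ) * Real.log (R ^ 2)
           else 0) := by
    by_cases h : 0 ≤ ℓ ∧ ℓ ≤ (n : ℤ)
    · rw [if_pos h, Finset.sum_eq_single ℓ.toNat]
      · rw [if_pos (by omega)]
        have hc : (ℓ : ℤ) + 1 = ((ℓ.toNat + 1 : ℕ) : ℤ) := by omega
        rw [hc, zpow_natCast]
      · intro b hb hbne
        rw [if_neg (by omega)]
      · intro hb
        exact absurd (Finset.mem_range.mpr (by omega)) hb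
    · rw [if_neg h, zero_mul]
      symm
      apply Finset.sum_eq_zero
      intro j hj
      rw [Finset.mem_range] at hj
      rw [if_neg (by omega)]
  rw [hL, ← Finset.sum_sub_distrib, ← Finset.sum_add_distrib]
  refine Finset.sum_congr rfl fun j hj => ?_
  by_cases hjl : (j : ℤ) = ℓ
  · have hm : (j : ℤ) - ℓ - 1 = -1 := by omega
    rw [hm, if_pos rfl, if_pos hjl, if_neg (not_not_intro hjl),
      if_neg (not_not_intro hjl), pow_succ]
    ring
  · have hm : (j : ℤ) - ℓ - 1 ≠ -1 := by omega
    rw [if_neg hm, if_pos hjl, if_pos hjl, if_neg hjl]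
    have hd : ((j : ℝ) - (ℓ : ℝ)) ≠ 0 := by
      have : ((j : ℤ) : ℝ) ≠ ((ℓ : ℤ) : ℝ) := by exact_mod_cast hjl
      exact sub_ne_zero.mpr (by exact_mod_cast this)
    have hm1 : (j : ℤ) - ℓ - 1 + 1 = (j : ℤ) - ℓ := by ring
    have hzp : R ^ (2 * ((j : ℤ) - ℓ)) = (R ^ 2) ^ ((j : ℤ) - ℓ) := by
      rw [zpow_mul, show ((2:ℤ)) = ((2:ℕ):ℤ) from rfl, zpow_natCast]
    rw [hm1, hzp]
    have hdc : (((j : ℤ) - ℓ - 1 : ℤ) : ℝ) + 1 = (j : ℝ) - (ℓ : ℝ) := by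
      push_cast; ring
    rw [hdc, pow_succ]
    field_simp
    ring
end

section
/- Let k ≥ 2 be an integer and let 𝒬 = [a,b,c] be a positive definite integral binary quadratic form of discriminant −D (D > 0, a > 0, b² − 4ac = −D), with CM-point τ_𝒬 := (−b + i√D)/(2a) and v_𝒬 := √D/(2a). Then for every z = x + iy in the upper half-plane with z ≠ τ_𝒬, D^{(1−k)/2} · 𝒬(z,1)^{k−1} · ∫₀^{artanh(√D/𝒬_z)} sinh(θ)^{2k−2} dθ = 2^{2−3k} · v_𝒬^{1−k} · (z − conj(τ_𝒬))^{2k−2} · X_{τ_𝒬}(z)^{k−1} · ∫₀^{1−|X_{τ_𝒬}(z)|²} t^{2k−2}(1−t)^{−k} dt, where 𝒬(z,1) := a z² + b z + c, 𝒬_z := (a(x²+y²)+bx+c)/y, and X_{τ_𝒬}(z) := (z − τ_𝒬)/(z − conj(τ_𝒬)). -/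
/-- The real inverse hyperbolic tangent, `artanh x = (1/2) log((1+x)/(1−x))`. -/
noncomputable def artanh (x : ℝ) : ℝ := (1 / 2) * Real.log ((1 + x) / (1 - x))

/-!
Write `τ = u + iv` and `z = x + iy`. Completing the square gives
`a (x² + y²) + b x + c = a (|z - τ|² + 2 y v)` and `𝒬(z,1) = a (z - τ) (z - τ̄)`, while
`|z - τ̄|² = |z - τ|² + 4 y v`. Hence `√D / 𝒬_z = (M - N) / (M + N)` for `N = |z - τ|²`,
`M = |z - τ̄|²`, so `artanh (√D / 𝒬_z) = -log R / 2` with `R = |X_τ(z)|² = N / M`.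
The substitution `t = 1 - e^{-2θ}` turns `t^{2k-2} (1-t)^{-k} dt` into
`2^{2k-1} sinh(θ)^{2k-2} dθ` and maps `[0, -log R / 2]` onto `[0, 1 - R]`; what is left is
the identity `D^{(1-k)/2} a^{k-1} = (2 v)^{1-k}`.
-/

open Real hiding artanh
open ComplexConjugate

lemma integral_pow_mul_one_sub_zpow_eq_integral_sinh_pow (m : ℕ) {R : ℝ} (hR : 0 < R) :
    ∫ t in (0 : ℝ)..1 - R, t ^ (2 * m) * (1 - t) ^ (-(m + 1 : ℤ))
      = 2 ^ (2 * m + 1) * ∫ θ in (0 : ℝ)..-log R / 2, sinh θ ^ (2 * m) := by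
  have hf (θ : ℝ) :
      HasDerivAt (fun θ ↦ 1 - exp (-(2 * θ))) (2 * exp (-(2 * θ))) θ := by
    simpa [mul_comm] using (((hasDerivAt_id θ).const_mul 2).neg.exp).const_sub 1
  have hg : ContinuousOn (fun t : ℝ ↦ t ^ (2 * m) * (1 - t) ^ (-(m + 1 : ℤ)))
      ((fun θ ↦ 1 - exp (-(2 * θ))) '' Set.uIcc 0 (-log R / 2)) := by
    rintro _ ⟨θ, -, rfl⟩
    refine (continuousAt_id.pow _ |>.mul ?_).continuousWithinAt
    exact (continuousAt_const.sub continuousAt_id).zpow₀ _ (Or.inl (by simp [exp_ne_zero]))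
  have hintegrand (θ : ℝ) :
      (1 - exp (-(2 * θ))) ^ (2 * m) * (1 - (1 - exp (-(2 * θ)))) ^ (-(m + 1 : ℤ))
        * (2 * exp (-(2 * θ))) = 2 ^ (2 * m + 1) * sinh θ ^ (2 * m) := by
    have he : exp (-θ) ≠ 0 := exp_ne_zero _
    have hexp : exp (-(2 * θ)) = exp (-θ) ^ 2 := by rw [← exp_nat_mul]; ring_nf
    have hsinh : 1 - exp (-θ) ^ 2 = 2 * exp (-θ) * sinh θ := by
      rw [sinh_eq, exp_neg θ]; field_simp
    rw [sub_sub_cancel, hexp, hsinh,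
      show -(m + 1 : ℤ) = -((m + 1 : ℕ) : ℤ) by push_cast; ring, zpow_neg,
      zpow_natCast, mul_pow, mul_pow]
    field_simp
    ring
  have hR' : 1 - exp (-(2 * (-log R / 2))) = 1 - R := by
    rw [mul_div_cancel₀ _ two_ne_zero, neg_neg, exp_log hR]
  have hsubst := intervalIntegral.integral_comp_mul_deriv' (fun θ _ ↦ hf θ) (by fun_prop) hg
  simp only [Function.comp_def, hintegrand, hR', mul_zero, neg_zero, exp_zero, sub_self] at hsubst
  rw [← hsubst, intervalIntegral.integral_const_mul]

lemma artanh_sub_div_add {N M : ℝ} (hN : 0 < N) (hM : 0 < M) :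
    artanh ((M - N) / (M + N)) = -log (N / M) / 2 := by
  have hMN : M + N ≠ 0 := by positivity
  have h : (1 + (M - N) / (M + N)) / (1 - (M - N) / (M + N)) = (N / M)⁻¹ := by
    rw [one_add_div hMN, one_sub_div hMN, div_div_div_cancel_right₀ hMN,
      show M + N + (M - N) = 2 * M by ring, show M + N - (M - N) = 2 * N by ring,
      mul_div_mul_left _ _ two_ne_zero, inv_div]
  rw [artanh, h, log_inv]
  ring

lemma Complex.normSq_sub_conj (z τ : ℂ) :
    normSq (z - conj τ) = normSq (z - τ) + 4 * z.im * τ.im := by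
  simp only [normSq_apply, sub_re, sub_im, conj_re, conj_im]
  ring

lemma UpperHalfPlane.coe_sub_conj_ne_zero (z τ : UpperHalfPlane) :
    (z : ℂ) - conj (τ : ℂ) ≠ 0 := by
  intro h
  have h_im := congrArg Complex.im h
  simp only [Complex.sub_im, Complex.conj_im, coe_im, sub_neg_eq_add, Complex.zero_im] at h_im
  linarith [z.im_pos, τ.im_pos]

section CMPoint

open Complex

variable {a b c s : ℝ} {τ : ℂ} (ha : a ≠ 0) (hdisc : b ^ 2 - 4 * a * c = -s ^ 2)
  (hτ : τ = (-b + s * I) / (2 * a))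
include ha hdisc hτ

lemma coeffs_eq_of_eq_cmPoint : b = -2 * a * τ.re ∧ s = 2 * a * τ.im ∧ c = a * normSq τ := by
  have h : 2 * a * τ = -b + s * I := by
    rw [hτ]; field_simp [ofReal_ne_zero.2 ha]
  have hre : 2 * a * τ.re = -b := by simpa using congrArg re h
  have him : 2 * a * τ.im = s := by simpa using congrArg im h
  refine ⟨by linarith, him.symm, mul_left_cancel₀ (by positivity : 4 * a ≠ 0) ?_⟩
  rw [normSq_apply]
  linear_combination -hdisc + (b - 2 * a * τ.re) * hre - (s + 2 * a * τ.im) * him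

lemma quadratic_eq_mul_sub_mul_sub_conj (z : ℂ) : a * z ^ 2 + b * z + c = a * ((z - τ) * (z - conj τ)) := by
  obtain ⟨hb, -, hc⟩ := coeffs_eq_of_eq_cmPoint ha hdisc hτ
  have hsum : τ + conj τ = 2 * τ.re := by rw [add_conj, ofReal_mul, ofReal_ofNat]
  rw [hb, hc]
  push_cast
  linear_combination a * z * hsum - a * mul_conj τ

lemma artanh_div_form_eq_neg_log (hτ₀ : 0 < τ.im) {z : ℂ} (hz₀ : 0 < z.im) (hz : z ≠ τ) :
    artanh (s / ((a * (z.re ^ 2 + z.im ^ 2) + b * z.re + c) / z.im))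
      = -Real.log (‖(z - τ) / (z - conj τ)‖ ^ 2) / 2 := by
  obtain ⟨hb, hs, hc⟩ := coeffs_eq_of_eq_cmPoint ha hdisc hτ
  have hN : 0 < normSq (z - τ) := normSq_pos.2 (sub_ne_zero.2 hz)
  have hM := normSq_sub_conj z τ
  have hform :
      a * (z.re ^ 2 + z.im ^ 2) + b * z.re + c = a * (normSq (z - τ) + 2 * z.im * τ.im) := by
    rw [hb, hc]
    simp only [normSq_apply, sub_re, sub_im]
    ring
  rw [norm_div, div_pow, Complex.sq_norm, Complex.sq_norm,
    ← artanh_sub_div_add hN (by rw [hM]; positivity),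
    hs, hform, hM]
  have : 0 < normSq (z - τ) + 2 * z.im * τ.im := by positivity
  congr 1
  field_simp
  ring

end CMPoint

/-- For an integer `k ≥ 2` and a positive definite integral binary quadratic
form `𝒬 = [a,b,c]` of discriminant `−D` with CM-point `τ_𝒬` and `v_𝒬 = √D/(2a)`, for every
`z` in the upper half-plane with `z ≠ τ_𝒬`:
`D^{(1−k)/2} 𝒬(z,1)^{k−1} ∫₀^{artanh(√D/𝒬_z)} sinh(θ)^{2k−2} dθ
  = 2^{2−3k} v_𝒬^{1−k} (z − conj τ_𝒬)^{2k−2} X_{τ_𝒬}(z)^{k−1}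
      ∫₀^{1−|X_{τ_𝒬}(z)|²} t^{2k−2}(1−t)^{−k} dt`. -/
theorem stmt_11 (k : ℕ) (hk : 2 ≤ k) (a b c D : ℤ) (hD : 0 < D) (ha : 0 < a)
    (hdisc : b ^ 2 - 4 * a * c = -D)
    (τ : UpperHalfPlane)
    (hτ : (τ : ℂ) = (-(b : ℂ) + (Real.sqrt D : ℂ) * Complex.I) / (2 * (a : ℂ)))
    (vQ : ℝ) (hvQ : vQ = Real.sqrt D / (2 * a))
    (z : UpperHalfPlane) (hz : z ≠ τ) :
    ((Real.sqrt D ^ ((1 : ℤ) - (k : ℤ)) : ℝ) : ℂ)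
        * ((a : ℂ) * (z : ℂ) ^ 2 + (b : ℂ) * (z : ℂ) + (c : ℂ)) ^ (k - 1)
        * ((∫ θ in (0:ℝ)..artanh (Real.sqrt D
              / (((a : ℝ) * (z.re ^ 2 + z.im ^ 2) + (b : ℝ) * z.re + (c : ℝ)) / z.im)),
            Real.sinh θ ^ (2 * k - 2) : ℝ) : ℂ)
      = (2 : ℂ) ^ ((2 : ℤ) - 3 * (k : ℤ)) * ((vQ ^ ((1 : ℤ) - (k : ℤ)) : ℝ) : ℂ)
          * ((z : ℂ) - (starRingEnd ℂ) (τ : ℂ)) ^ (2 * k - 2)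
          * (((z : ℂ) - (τ : ℂ)) / ((z : ℂ) - (starRingEnd ℂ) (τ : ℂ))) ^ (k - 1)
          * ((∫ t in
                (0:ℝ)..(1 - ‖((z : ℂ) - (τ : ℂ))
                    / ((z : ℂ) - (starRingEnd ℂ) (τ : ℂ))‖ ^ 2),
              t ^ (2 * k - 2) * (1 - t) ^ (-(k : ℤ)) : ℝ) : ℂ) := by
  obtain ⟨m, rfl⟩ : ∃ m, k = m + 1 := ⟨k - 1, by omega⟩
  have ha' : (a : ℝ) ≠ 0 := by exact_mod_cast ha.ne'
  have hdisc' : (b : ℝ) ^ 2 - 4 * a * c = -√D ^ 2 := by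
    rw [sq_sqrt (by positivity)]; exact_mod_cast hdisc
  have hτ' : (τ : ℂ) = (-(b : ℝ) + (√D : ℝ) * Complex.I) / (2 * (a : ℝ)) := by
    push_cast; exact hτ
  have hzτ : (z : ℂ) ≠ τ := fun h ↦ hz (UpperHalfPlane.ext h)
  have hR : 0 < ‖((z : ℂ) - τ) / ((z : ℂ) - conj (τ : ℂ))‖ ^ 2 := by
    have := div_ne_zero (sub_ne_zero.2 hzτ) (z.coe_sub_conj_ne_zero τ)
    positivity
  have hs : √D = 2 * a * τ.im := (coeffs_eq_of_eq_cmPoint ha' hdisc' hτ').2.1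
  have hartanh := artanh_div_form_eq_neg_log ha' hdisc' hτ' τ.im_pos z.im_pos hzτ
  have hQ : (a : ℂ) * z ^ 2 + b * z + c = a * ((z - τ) * (z - conj (τ : ℂ))) := by
    exact_mod_cast quadratic_eq_mul_sub_mul_sub_conj ha' hdisc' hτ' z
  have hvQ' : vQ = τ.im := by rw [hvQ, hs]; field_simp
  simp only [UpperHalfPlane.coe_re, UpperHalfPlane.coe_im] at hartanh
  simp only [show 2 * (m + 1) - 2 = 2 * m by omega, Nat.add_sub_cancel, Nat.cast_add, Nat.cast_one]
  rw [hartanh, integral_pow_mul_one_sub_zpow_eq_integral_sinh_pow m hR, hQ, hvQ', hs]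
  push_cast
  simp only [show (1 : ℤ) - (m + 1) = -(m : ℤ) by ring,
    show (2 : ℤ) - 3 * (m + 1) = -((3 * m + 1 : ℕ) : ℤ) by push_cast; ring,
    zpow_neg, zpow_natCast]
  have hv : (τ.im : ℂ) ≠ 0 := Complex.ofReal_ne_zero.2 τ.im_pos.ne'
  have haC : (a : ℂ) ≠ 0 := by exact_mod_cast ha.ne'
  have hw' := z.coe_sub_conj_ne_zero τ
  generalize (z : ℂ) - τ = w at *
  generalize (z : ℂ) - conj (τ : ℂ) = w' at *
  generalize ((∫ θ in (0 : ℝ)..-log (‖w / w'‖ ^ 2) / 2, sinh θ ^ (2 * m) : ℝ) : ℂ) = J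
  rw [div_pow w]
  field_simp
  rw [div_eq_iff (pow_ne_zero m (mul_ne_zero (mul_ne_zero two_ne_zero haC) hv))]
  ring
end

section
/- Let k ≥ 2 be an integer and let 𝒬 = [a,b,c] be a positive definite integral binary quadratic form of discriminant −D (D > 0, a > 0, b² − 4ac = −D), with CM-point τ_𝒬 := (−b + i√D)/(2a) and v_𝒬 := √D/(2a). Then for every z = x + iy in the upper half-plane with z ≠ τ_𝒬, ((z − τ_𝒬)(z − conj(τ_𝒬))/(2 v_𝒬))^{k−1} · ∫₀^{arsinh(1/sinh(d(z,τ_𝒬)))} sinh(θ)^{2k−2} dθ = D^{(1−k)/2} · 𝒬(z,1)^{k−1} · ∫₀^{artanh(√D/𝒬_z)} sinh(θ)^{2k−2} dθ, where d denotes the hyperbolic distance on the upper half-plane, 𝒬(z,1) := a z² + b z + c, and 𝒬_z := (a(x²+y²)+bx+c)/y. -/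
open Complex ComplexConjugate

lemma arsinh_one_div_sinh_eq_artanh {d : ℝ} (hd : 0 < d) :
    Real.arsinh (1 / Real.sinh d) = artanh (1 / Real.cosh d) := by
  have hsinh : 0 < Real.sinh d := Real.sinh_pos_iff.mpr hd
  have hcosh_sq : Real.cosh d ^ 2 = 1 + Real.sinh d ^ 2 := Real.cosh_sq' d
  have hcosh : 1 < Real.cosh d := Real.one_lt_cosh.mpr hd.ne'
  have hsqrt : √(1 + (1 / Real.sinh d) ^ 2) = Real.cosh d / Real.sinh d := by
    rw [← Real.sqrt_sq (by positivity : 0 ≤ Real.cosh d / Real.sinh d)]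
    congr 1
    field_simp
    linarith
  -- both sides are `log ((1 + cosh d) / sinh d)`
  have hratio : (1 + 1 / Real.cosh d) / (1 - 1 / Real.cosh d)
      = ((1 + Real.cosh d) / Real.sinh d) ^ 2 := by
    have : Real.cosh d - 1 ≠ 0 := by linarith
    field_simp
    nlinarith
  rw [Real.arsinh, artanh, hsqrt, hratio, Real.log_pow]
  push_cast
  ring_nf

noncomputable def cmPoint (a b s : ℝ) : ℂ := (-b + s * I) / (2 * a)

section cmPoint

variable {a b c s : ℝ}

lemma conj_cmPoint : conj (cmPoint a b s) = (-b - s * I) / (2 * a) := by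
  simp [cmPoint, map_ofNat]
  ring

lemma cmPoint_re (ha : a ≠ 0) : (cmPoint a b s).re = -b / (2 * a) := by
  simp [cmPoint, Complex.div_re, Complex.normSq]
  field_simp

lemma cmPoint_im (ha : a ≠ 0) : (cmPoint a b s).im = s / (2 * a) := by
  simp [cmPoint, Complex.div_im, Complex.normSq]
  field_simp

lemma mul_sub_cmPoint_mul_sub_conj (ha : a ≠ 0) (hs : s ^ 2 = 4 * a * c - b ^ 2) (z : ℂ) :
    (z - cmPoint a b s) * (z - conj (cmPoint a b s)) = (a * z ^ 2 + b * z + c) / a := by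
  have hsC : (s : ℂ) ^ 2 = 4 * a * c - b ^ 2 := by exact_mod_cast congrArg ofReal hs
  have haC : (a : ℂ) ≠ 0 := ofReal_ne_zero.mpr ha
  rw [conj_cmPoint, cmPoint]
  field_simp
  linear_combination hsC - (s : ℂ) ^ 2 * I_sq

lemma UpperHalfPlane.cosh_dist_cmPoint (ha : a ≠ 0) (hs : s ≠ 0)
    (hs2 : s ^ 2 = 4 * a * c - b ^ 2) {τ : UpperHalfPlane} (hτ : (τ : ℂ) = cmPoint a b s)
    (z : UpperHalfPlane) :
    Real.cosh (dist z τ) = (a * (z.re ^ 2 + z.im ^ 2) + b * z.re + c) / z.im / s := by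
  have hre : τ.re = -b / (2 * a) := by rw [← coe_re, hτ, cmPoint_re ha]
  have him : τ.im = s / (2 * a) := by rw [← coe_im, hτ, cmPoint_im ha]
  have hz := z.im_pos
  rw [cosh_dist, Complex.dist_eq_re_im, Real.sq_sqrt (by positivity)]
  simp only [coe_re, coe_im, hre, him]
  field_simp
  linear_combination hs2

end cmPoint

lemma div_pow_pred_eq_zpow_one_sub_mul {K : Type*} [Field K] (w s : K) {k : ℕ}
    (hk : 1 ≤ k) : (w / s) ^ (k - 1) = s ^ ((1 : ℤ) - k) * w ^ (k - 1) := by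
  have : (1 : ℤ) - k = -((k - 1 : ℕ) : ℤ) := by omega
  rw [this, zpow_neg, zpow_natCast, div_pow, div_eq_inv_mul]

/-- For an integer `k ≥ 2` and a positive definite integral binary quadratic
form `𝒬 = [a,b,c]` of discriminant `−D` with CM-point `τ_𝒬` and `v_𝒬 = √D/(2a)`, for every
`z` in the upper half-plane with `z ≠ τ_𝒬`:
`((z − τ_𝒬)(z − conj τ_𝒬)/(2v_𝒬))^{k−1} ∫₀^{arsinh(1/sinh d(z,τ_𝒬))} sinh(θ)^{2k−2} dθ
  = D^{(1−k)/2} 𝒬(z,1)^{k−1} ∫₀^{artanh(√D/𝒬_z)} sinh(θ)^{2k−2} dθ`. -/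
theorem stmt_12 (k : ℕ) (hk : 2 ≤ k) (a b c D : ℤ) (hD : 0 < D) (ha : 0 < a)
    (hdisc : b ^ 2 - 4 * a * c = -D)
    (τ : UpperHalfPlane)
    (hτ : (τ : ℂ) = (-(b : ℂ) + (Real.sqrt D : ℂ) * Complex.I) / (2 * (a : ℂ)))
    (vQ : ℝ) (hvQ : vQ = Real.sqrt D / (2 * a))
    (z : UpperHalfPlane) (hz : z ≠ τ) :
    (((z : ℂ) - (τ : ℂ)) * ((z : ℂ) - (starRingEnd ℂ) (τ : ℂ)) / ((2 * vQ : ℝ) : ℂ)) ^ (k - 1)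
        * ((∫ θ in (0:ℝ)..Real.arsinh (1 / Real.sinh (dist z τ)),
            Real.sinh θ ^ (2 * k - 2) : ℝ) : ℂ)
      = ((Real.sqrt D ^ ((1 : ℤ) - (k : ℤ)) : ℝ) : ℂ)
          * ((a : ℂ) * (z : ℂ) ^ 2 + (b : ℂ) * (z : ℂ) + (c : ℂ)) ^ (k - 1)
          * ((∫ θ in (0:ℝ)..artanh (Real.sqrt D
                / (((a : ℝ) * (z.re ^ 2 + z.im ^ 2) + (b : ℝ) * z.re + (c : ℝ)) / z.im)),
              Real.sinh θ ^ (2 * k - 2) : ℝ) : ℂ) := by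
  set s := √(D : ℝ)
  have hs : s ≠ 0 := (Real.sqrt_pos.mpr (by exact_mod_cast hD)).ne'
  have ha' : (a : ℝ) ≠ 0 := by exact_mod_cast ha.ne'
  have hs2 : s ^ 2 = 4 * a * c - b ^ 2 := by
    have hdisc' : (b : ℝ) ^ 2 - 4 * a * c = -D := by exact_mod_cast hdisc
    rw [Real.sq_sqrt (by positivity)]
    linarith
  have hτ' : (τ : ℂ) = cmPoint a b s := by simpa [cmPoint] using hτ
  have hcoef : ((2 * vQ : ℝ) : ℂ) = s / ((a : ℝ) : ℂ) := by
    rw [hvQ]; push_cast; field_simp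
  have hend : s / ((a * (z.re ^ 2 + z.im ^ 2) + b * z.re + c) / z.im)
      = 1 / Real.cosh (dist z τ) := by
    rw [UpperHalfPlane.cosh_dist_cmPoint ha' hs hs2 hτ' z]
    field_simp
  rw [hcoef, hτ', mul_sub_cmPoint_mul_sub_conj ha' hs2, hend,
    ← arsinh_one_div_sinh_eq_artanh (dist_pos.mpr hz),
    div_div_div_cancel_right₀ (ofReal_ne_zero.mpr ha'), ofReal_zpow,
    ← div_pow_pred_eq_zpow_one_sub_mul _ _ (by omega)]
  push_cast
  ring
end

section
/- Let k ≥ 2 be an integer and let 𝒬 = [a,b,c] be a positive definite integral binary quadratic form of discriminant −D (D > 0, a > 0, b² − 4ac = −D), with CM-point τ_𝒬. Define T : {(x,y) ∈ ℝ² : y > 0} → ℂ by T(x,y) := D^{(1−k)/2} · (a(x+iy)² + b(x+iy) + c)^{k−1} · ∫₀^{artanh(√D·y/(a(x²+y²)+bx+c))} sinh(θ)^{2k−2} dθ. Then for every z = x + iy in the upper half-plane with z ≠ τ_𝒬, i · y^{2−2k} · conj( (∂T/∂x)(x,y) + i·(∂T/∂y)(x,y) ) = D^{k/2} · (a z² +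 b z + c)^{−k}. (Equivalently, ξ_{2−2k}(T) = D^{k/2} 𝒬(z,1)^{−k}, where ξ_κ := 2i y^κ conj(∂/∂conj(z)).) -/
/-- The function `T(x,y) = D^{(1−k)/2} 𝒬(z,1)^{k−1} ∫₀^{artanh(√D·y/(a(x²+y²)+bx+c))}
sinh(θ)^{2k−2} dθ` for `z = x + iy`, where `𝒬 = [a,b,c]` has discriminant `−D`. -/
noncomputable def Tfun (k : ℕ) (a b c D : ℤ) (x y : ℝ) : ℂ :=
  ((Real.sqrt D ^ ((1 : ℤ) - (k : ℤ)) : ℝ) : ℂ)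
    * ((a : ℂ) * ((x : ℂ) + (y : ℂ) * Complex.I) ^ 2
        + (b : ℂ) * ((x : ℂ) + (y : ℂ) * Complex.I) + (c : ℂ)) ^ (k - 1)
    * ((∫ θ in (0:ℝ)..artanh (Real.sqrt D * y / ((a : ℝ) * (x ^ 2 + y ^ 2) + (b : ℝ) * x + (c : ℝ))),
        Real.sinh θ ^ (2 * k - 2) : ℝ) : ℂ)

/-! Write `T = D^{(1-k)/2} 𝒬(z,1)^{k-1} F(θ)` with `F(θ) = ∫₀^θ sinh^{2k-2}` and
`θ = artanh u`, `u = √D y / (y 𝒬_z)`. The factor `𝒬(z,1)^{k-1}` is holomorphic, so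
`∂_x + i ∂_y` only sees `F(θ)` and yields `sinh(θ)^{2k-2} (∂_x + i ∂_y) θ`. Since
`|𝒬(z,1)|² = (y 𝒬_z)² - D y²`, one finds `(∂_x + i ∂_y) θ = i √D / conj 𝒬(z,1)` and
`sinh² θ = u² / (1 - u²) = D y² / |𝒬(z,1)|²`; multiplying out gives
`i D^{k/2} y^{2k-2} / conj 𝒬(z,1)^k`, and applying `i y^{2-2k} conj` gives the claim. -/

open Complex ComplexConjugate

lemma hasDerivAt_artanh {x : ℝ} (hx : x ∈ Set.Ioo (-1) 1) :
    HasDerivAt artanh (1 - x ^ 2)⁻¹ x := by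
  have hp : 0 < 1 + x := by linarith [hx.1]
  have hm : 0 < 1 - x := by linarith [hx.2]
  have hratio : HasDerivAt (fun t : ℝ => (1 + t) / (1 - t))
      ((1 * (1 - x) - (1 + x) * (-1)) / (1 - x) ^ 2) x :=
    ((hasDerivAt_id x).const_add 1).div ((hasDerivAt_id x).neg.const_add 1) hm.ne'
  refine ((hratio.log (div_pos hp hm).ne').const_mul (1 / 2 : ℝ)).congr_deriv ?_
  have hq : 1 - x ^ 2 = (1 + x) * (1 - x) := by ring
  field_simp [hq]
  ring

lemma sinh_artanh_sq {x : ℝ} (hx : x ∈ Set.Ioo (-1) 1) :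
    Real.sinh (artanh x) ^ 2 = x ^ 2 / (1 - x ^ 2) := by
  have h : 0 ≤ 1 - x ^ 2 := by nlinarith [hx.1, hx.2]
  rw [artanh, ← Real.artanh_eq_half_log (Set.Ioo_subset_Icc_self hx), Real.sinh_artanh hx,
    div_pow, Real.sq_sqrt h]

lemma hasDerivAt_integral_sinh_pow (n : ℕ) (t : ℝ) :
    HasDerivAt (fun t : ℝ => ∫ θ in (0 : ℝ)..t, Real.sinh θ ^ n) (Real.sinh t ^ n) t := by
  have hc : Continuous fun θ : ℝ => Real.sinh θ ^ n := Real.continuous_sinh.pow n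
  exact intervalIntegral.integral_hasDerivAt_right (hc.intervalIntegrable _ _)
    (hc.stronglyMeasurableAtFilter _ _) hc.continuousAt

/-- Cauchy–Riemann: `∂/∂x + i ∂/∂y` does not see the holomorphic factor. -/
lemma deriv_add_I_mul_deriv_holomorphic_mul {f : ℂ → ℂ} {f' : ℂ} {g : ℝ → ℝ → ℂ}
    {x y : ℝ} {gx gy : ℂ} (hf : HasDerivAt f f' (x + y * I))
    (hgx : HasDerivAt (fun x => g x y) gx x) (hgy : HasDerivAt (g x) gy y) :
    deriv (fun x : ℝ => f (x + y * I) * g x y) x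
        + I * deriv (fun y : ℝ => f (x + y * I) * g x y) y
      = f (x + y * I) * (gx + I * gy) := by
  have hfx : HasDerivAt (fun t : ℝ => f (t + y * I)) (f' * 1) x :=
    (hf.comp (x : ℂ) ((hasDerivAt_id (x : ℂ)).add_const (y * I))).comp_ofReal
  have hfy : HasDerivAt (fun t : ℝ => f (x + t * I)) (f' * (1 * I)) y :=
    (hf.comp (y : ℂ) (((hasDerivAt_id (y : ℂ)).mul_const I).const_add (x : ℂ))).comp_ofReal
  have hx : HasDerivAt (fun t : ℝ => f (t + y * I) * g t y) _ x := hfx.mul hgx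
  have hy : HasDerivAt (fun t : ℝ => f (x + t * I) * g x t) _ y := hfy.mul hgy
  rw [hx.deriv, hy.deriv]
  linear_combination f' * g x y * I_sq

noncomputable section QuadraticForm

variable {a b c D : ℝ}

def quadForm (a b c : ℝ) (w : ℂ) : ℂ := a * w ^ 2 + b * w + c

/-- `y 𝒬_z` for `z = x + iy`. -/
def quadHeight (a b c x y : ℝ) : ℝ := a * (x ^ 2 + y ^ 2) + b * x + c

def upperLimit (a b c D x y : ℝ) : ℝ := artanh (√D * y / quadHeight a b c x y)

lemma quadForm_add_mul_I (x y : ℝ) :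
    quadForm a b c (x + y * I)
      = ((quadHeight a b c x y - 2 * a * y ^ 2 : ℝ) : ℂ)
        + ((y * (2 * a * x + b) : ℝ) : ℂ) * I := by
  simp only [quadForm, quadHeight]
  push_cast
  linear_combination (a : ℂ) * y ^ 2 * I_sq

lemma normSq_quadForm (hdisc : b ^ 2 - 4 * a * c = -D) (x y : ℝ) :
    normSq (quadForm a b c (x + y * I)) = quadHeight a b c x y ^ 2 - D * y ^ 2 := by
  rw [quadForm_add_mul_I, normSq_add_mul_I]
  simp only [quadHeight]
  linear_combination y ^ 2 * hdisc

lemma quadHeight_pos (ha : 0 < a) (hD : 0 < D) (hdisc : b ^ 2 - 4 * a * c = -D) (x y : ℝ) :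
    0 < quadHeight a b c x y := by
  have h : 4 * a * quadHeight a b c x y = (2 * a * x + b) ^ 2 + (2 * a * y) ^ 2 + D := by
    simp only [quadHeight]
    linear_combination -hdisc
  have : 0 < 4 * a * quadHeight a b c x y := by rw [h]; positivity
  exact pos_of_mul_pos_right this (by positivity)

lemma quadForm_eq_mul_sub_mul_sub (ha : a ≠ 0) (hD : 0 ≤ D) (hdisc : b ^ 2 - 4 * a * c = -D)
    (w : ℂ) :
    quadForm a b c w
      = a * (w - (-b + √D * I) / (2 * a)) * (w - (-b - √D * I) / (2 * a)) := by
  have hs : (√D : ℂ) ^ 2 = D := by exact_mod_cast Real.sq_sqrt hD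
  have hdiscC : (b : ℂ) ^ 2 - 4 * a * c = -D := by exact_mod_cast hdisc
  have haC : (a : ℂ) ≠ 0 := ofReal_ne_zero.2 ha
  simp only [quadForm]
  field_simp
  linear_combination -hdiscC - hs + (√D : ℂ) ^ 2 * I_sq

/-- The other root `(-b - √D i) / 2a` lies in the lower half-plane. -/
lemma quadForm_ne_zero (ha : 0 < a) (hD : 0 ≤ D) (hdisc : b ^ 2 - 4 * a * c = -D) {w : ℂ}
    (hw : 0 < w.im) (hτ : w ≠ (-b + √D * I) / (2 * a)) : quadForm a b c w ≠ 0 := by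
  have haC : (a : ℂ) ≠ 0 := ofReal_ne_zero.2 ha.ne'
  have hconj : w - (-b - √D * I) / (2 * a) ≠ 0 := by
    intro h
    have him : (2 * a * w + b + √D * I).im = 0 := by
      rw [show 2 * (a : ℂ) * w + b + √D * I = 2 * a * (w - (-b - √D * I) / (2 * a)) by
        field_simp; ring, h, mul_zero, zero_im]
    simp only [add_im, mul_im, mul_re, re_ofNat, ofReal_re, im_ofNat, ofReal_im, mul_zero,
      sub_zero, zero_mul, add_zero, I_im, mul_one, I_re] at him
    nlinarith [Real.sqrt_nonneg D]
  rw [quadForm_eq_mul_sub_mul_sub ha.ne' hD hdisc]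
  exact mul_ne_zero (mul_ne_zero haC (sub_ne_zero.2 hτ)) hconj

variable {x y : ℝ}

lemma one_sub_sq_sqrt_mul_div_quadHeight (hD : 0 ≤ D) (hdisc : b ^ 2 - 4 * a * c = -D)
    (hH : quadHeight a b c x y ≠ 0) :
    1 - (√D * y / quadHeight a b c x y) ^ 2
      = normSq (quadForm a b c (x + y * I)) / quadHeight a b c x y ^ 2 := by
  rw [normSq_quadForm hdisc, div_pow, mul_pow, Real.sq_sqrt hD]
  field_simp

lemma sqrt_mul_div_quadHeight_mem_Ioo (ha : 0 < a) (hD : 0 < D)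
    (hdisc : b ^ 2 - 4 * a * c = -D) (hQ : quadForm a b c (x + y * I) ≠ 0) :
    √D * y / quadHeight a b c x y ∈ Set.Ioo (-1) 1 := by
  have hH := quadHeight_pos ha hD hdisc x y
  have h : 0 < 1 - (√D * y / quadHeight a b c x y) ^ 2 := by
    rw [one_sub_sq_sqrt_mul_div_quadHeight hD.le hdisc hH.ne']
    exact div_pos (normSq_pos.2 hQ) (by positivity)
  exact abs_lt.1 ((sq_lt_one_iff_abs_lt_one _).1 (by linarith))

lemma sinh_upperLimit_sq (ha : 0 < a) (hD : 0 < D) (hdisc : b ^ 2 - 4 * a * c = -D)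
    (hQ : quadForm a b c (x + y * I) ≠ 0) :
    Real.sinh (upperLimit a b c D x y) ^ 2 = D * y ^ 2 / normSq (quadForm a b c (x + y * I)) := by
  have hH := quadHeight_pos ha hD hdisc x y
  rw [upperLimit, sinh_artanh_sq (sqrt_mul_div_quadHeight_mem_Ioo ha hD hdisc hQ),
    one_sub_sq_sqrt_mul_div_quadHeight hD.le hdisc hH.ne', div_pow, mul_pow, Real.sq_sqrt hD.le]
  field_simp

lemma hasDerivAt_quadHeight_re :
    HasDerivAt (fun x => quadHeight a b c x y) (2 * a * x + b) x := by
  refine ((((hasDerivAt_pow 2 x).add_const (y ^ 2)).const_mul a).add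
    ((hasDerivAt_id x).const_mul b)).add_const c |>.congr_deriv ?_
  simp only [Nat.cast_ofNat, Nat.add_one_sub_one, pow_one]
  ring

lemma hasDerivAt_quadHeight_im :
    HasDerivAt (fun y => quadHeight a b c x y) (2 * a * y) y := by
  refine ((((hasDerivAt_pow 2 y).const_add (x ^ 2)).const_mul a).add_const (b * x)).add_const c
    |>.congr_deriv ?_
  simp only [Nat.cast_ofNat, Nat.add_one_sub_one, pow_one]
  ring

lemma hasDerivAt_upperLimit_re (ha : 0 < a) (hD : 0 < D) (hdisc : b ^ 2 - 4 * a * c = -D)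
    (hQ : quadForm a b c (x + y * I) ≠ 0) :
    HasDerivAt (fun x => upperLimit a b c D x y)
      (-(√D * y * (2 * a * x + b)) / normSq (quadForm a b c (x + y * I))) x := by
  have hH := quadHeight_pos ha hD hdisc x y
  have hu := (hasDerivAt_const x (√D * y)).div hasDerivAt_quadHeight_re hH.ne'
  refine ((hasDerivAt_artanh (sqrt_mul_div_quadHeight_mem_Ioo ha hD hdisc hQ)).comp x hu
    ).congr_deriv ?_
  rw [one_sub_sq_sqrt_mul_div_quadHeight hD.le hdisc hH.ne']
  field_simp
  ring

lemma hasDerivAt_upperLimit_im (ha : 0 < a) (hD : 0 < D) (hdisc : b ^ 2 - 4 * a * c = -D)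
    (hQ : quadForm a b c (x + y * I) ≠ 0) :
    HasDerivAt (fun y => upperLimit a b c D x y)
      (√D * (quadHeight a b c x y - 2 * a * y ^ 2) / normSq (quadForm a b c (x + y * I))) y := by
  have hH := quadHeight_pos ha hD hdisc x y
  have hu := ((hasDerivAt_id' y).const_mul √D).div hasDerivAt_quadHeight_im hH.ne'
  refine ((hasDerivAt_artanh (sqrt_mul_div_quadHeight_mem_Ioo ha hD hdisc hQ)).comp y hu
    ).congr_deriv ?_
  rw [one_sub_sq_sqrt_mul_div_quadHeight hD.le hdisc hH.ne']
  field_simp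

lemma upperLimit_partial_re_add_I_mul_partial_im (hQ : quadForm a b c (x + y * I) ≠ 0) :
    ((-(√D * y * (2 * a * x + b)) / normSq (quadForm a b c (x + y * I)) : ℝ) : ℂ)
        + I * ((√D * (quadHeight a b c x y - 2 * a * y ^ 2)
          / normSq (quadForm a b c (x + y * I)) : ℝ) : ℂ)
      = I * √D / conj (quadForm a b c (x + y * I)) := by
  have hQc : conj (quadForm a b c (x + y * I)) ≠ 0 := (map_ne_zero _).2 hQ
  push_cast
  rw [← mul_conj]
  field_simp
  rw [quadForm_add_mul_I]
  push_cast
  linear_combination -(√D : ℂ) * y * (2 * a * x + b) * I_sq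

end QuadraticForm

lemma deriv_Tfun_add_I_mul_deriv {k : ℕ} (hk : 1 ≤ k) {a b c D : ℤ} (ha : 0 < a) (hD : 0 < D)
    (hdisc : b ^ 2 - 4 * a * c = -D) {x y : ℝ} (hQ : quadForm a b c (x + y * I) ≠ 0) :
    deriv (fun x => Tfun k a b c D x y) x + I * deriv (fun y => Tfun k a b c D x y) y
      = I * ((√D ^ k : ℝ) : ℂ) * (y : ℂ) ^ (2 * k - 2)
        / conj (quadForm a b c (x + y * I)) ^ k := by
  obtain ⟨m, rfl⟩ : ∃ m, k = m + 1 := ⟨k - 1, by omega⟩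
  have haR : (0 : ℝ) < a := by exact_mod_cast ha
  have hDR : (0 : ℝ) < D := by exact_mod_cast hD
  have hdiscR : (b : ℝ) ^ 2 - 4 * a * c = -D := by exact_mod_cast hdisc
  set s : ℝ := √(D : ℝ) with hsdef
  set f : ℂ → ℂ := fun w => ((s ^ ((1 : ℤ) - (m + 1 : ℕ)) : ℝ) : ℂ) * quadForm a b c w ^ m
  set g : ℝ → ℝ → ℂ := fun x y =>
    ((∫ θ in (0 : ℝ)..upperLimit a b c D x y, Real.sinh θ ^ (2 * m) : ℝ) : ℂ)
  have hT : ∀ x y, Tfun (m + 1) a b c D x y = f (x + y * I) * g x y := by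
    intro x y
    simp only [Tfun, f, g, quadForm, upperLimit, quadHeight, ofReal_intCast,
      show 2 * (m + 1) - 2 = 2 * m by omega, add_tsub_cancel_right, ← hsdef]
  have hf : HasDerivAt f (deriv f (x + y * I)) (x + y * I) :=
    ((by simp only [f, quadForm]; fun_prop : Differentiable ℂ f) _).hasDerivAt
  have hgx := ((hasDerivAt_integral_sinh_pow (2 * m) _).comp x
    (hasDerivAt_upperLimit_re haR hDR hdiscR hQ)).ofReal_comp
  have hgy := ((hasDerivAt_integral_sinh_pow (2 * m) _).comp y
    (hasDerivAt_upperLimit_im haR hDR hdiscR hQ)).ofReal_comp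
  simp only [hT]
  rw [deriv_add_I_mul_deriv_holomorphic_mul hf hgx hgy]
  set Q := quadForm a b c (x + y * I) with hQdef
  have hS : Real.sinh (upperLimit a b c D x y) ^ (2 * m) = (D * y ^ 2 / normSq Q) ^ m := by
    rw [pow_mul, sinh_upperLimit_sq haR hDR hdiscR hQ]
  have hC : s ^ ((1 : ℤ) - (m + 1 : ℕ)) = (s ^ m)⁻¹ := by
    rw [show (1 : ℤ) - (m + 1 : ℕ) = -(m : ℤ) by push_cast; ring, zpow_neg, zpow_natCast]
  have hDs : (D : ℂ) = (s : ℂ) ^ 2 := by exact_mod_cast (Real.sq_sqrt hDR.le).symm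
  have hs : (s : ℂ) ≠ 0 := ofReal_ne_zero.2 (Real.sqrt_pos.2 hDR).ne'
  calc f (x + y * I) * (_ + I * _)
      = f (x + y * I) * ((Real.sinh (upperLimit a b c D x y) ^ (2 * m) : ℝ) : ℂ)
          * (((-(s * y * (2 * a * x + b)) / normSq Q : ℝ) : ℂ)
            + I * ((s * (quadHeight a b c x y - 2 * a * y ^ 2) / normSq Q : ℝ) : ℂ)) := by
        push_cast; ring
    _ = _ := by
      rw [upperLimit_partial_re_add_I_mul_partial_im hQ, hS]
      simp only [f]
      rw [← hQdef, hC, ← hsdef]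
      push_cast
      rw [← mul_conj, hDs, show 2 * (m + 1) - 2 = 2 * m by omega, div_pow, mul_pow, mul_pow]
      field_simp
      ring

/-- For an integer `k ≥ 2` and a positive definite integral binary quadratic
form `𝒬 = [a,b,c]` of discriminant `−D` with CM-point `τ_𝒬`, for every `z = x + iy` in the
upper half-plane with `z ≠ τ_𝒬`:
`i y^{2−2k} conj(∂T/∂x + i ∂T/∂y) = D^{k/2} 𝒬(z,1)^{−k}`, i.e.
`ξ_{2−2k}(T) = D^{k/2} 𝒬(z,1)^{−k}`. -/
theorem stmt_13 (k : ℕ) (hk : 2 ≤ k) (a b c D : ℤ) (hD : 0 < D) (ha : 0 < a)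
    (hdisc : b ^ 2 - 4 * a * c = -D)
    (τ : UpperHalfPlane)
    (hτ : (τ : ℂ) = (-(b : ℂ) + (Real.sqrt D : ℂ) * Complex.I) / (2 * (a : ℂ)))
    (z : UpperHalfPlane) (hz : z ≠ τ) :
    Complex.I * ((z.im : ℂ)) ^ ((2 : ℤ) - 2 * (k : ℤ))
        * (starRingEnd ℂ) (deriv (fun x : ℝ => Tfun k a b c D x z.im) z.re
            + Complex.I * deriv (fun y : ℝ => Tfun k a b c D z.re y) z.im)
      = ((Real.sqrt D ^ (k : ℕ) : ℝ) : ℂ)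
          * ((a : ℂ) * (z : ℂ) ^ 2 + (b : ℂ) * (z : ℂ) + (c : ℂ)) ^ (-(k : ℤ)) := by
  have hQ : quadForm a b c z ≠ 0 := by
    have hdiscR : (b : ℝ) ^ 2 - 4 * a * c = -D := by exact_mod_cast hdisc
    refine quadForm_ne_zero (by exact_mod_cast ha) (by exact_mod_cast hD.le) hdiscR z.im_pos
      fun hzτ => hz (UpperHalfPlane.ext ?_)
    rw [hτ, hzτ]
    push_cast
    rfl
  rw [deriv_Tfun_add_I_mul_deriv (by omega) ha hD hdisc (by rwa [UpperHalfPlane.re_add_im]),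
    UpperHalfPlane.re_add_im]
  obtain ⟨m, rfl⟩ : ∃ m, k = m + 1 := ⟨k - 1, by omega⟩
  have hy : (z.im : ℂ) ≠ 0 := ofReal_ne_zero.2 z.im_pos.ne'
  simp only [quadForm, ofReal_intCast] at hQ ⊢
  generalize (a : ℂ) * z ^ 2 + b * z + c = Q at hQ ⊢
  rw [show (2 : ℤ) - 2 * ((m + 1 : ℕ) : ℤ) = -((2 * m : ℕ) : ℤ) by push_cast; ring,
    show 2 * (m + 1) - 2 = 2 * m by omega, zpow_neg, zpow_natCast, zpow_neg, zpow_natCast]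
  simp only [map_div₀, map_mul, map_pow, conj_conj, conj_I, conj_ofReal]
  field_simp
  linear_combination -((√(D : ℝ) ^ (m + 1) : ℝ) : ℂ) * I_sq
end

section
/- Let k ≥ 1 be an integer and define g : {(x,y) ∈ ℝ² : 0 < x² + y² < 1} → ℝ by g(x,y) := ∫₀^{artanh((1−x²−y²)/(1+x²+y²))} sinh(θ)^{2k−2} dθ. Then for every (x,y) with 0 < x²+y² < 1, writing z := x + iy, (1/2)·( (∂g/∂x)(x,y) − i·(∂g/∂y)(x,y) ) = −(x²+y²−1)^{2k−2} / (2^{2k−1} · z^k · conj(z)^{k−1}). -/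
/-- The function `g(x,y) = ∫₀^{artanh((1−x²−y²)/(1+x²+y²))} sinh(θ)^{2k−2} dθ`. -/
noncomputable def gfun (k : ℕ) (x y : ℝ) : ℝ :=
  ∫ θ in (0:ℝ)..artanh ((1 - x ^ 2 - y ^ 2) / (1 + x ^ 2 + y ^ 2)), Real.sinh θ ^ (2 * k - 2)

lemma artanh_one_sub_div_one_add {s : ℝ} (hs : 1 + s ≠ 0) :
    artanh ((1 - s) / (1 + s)) = -Real.log s / 2 := by
  have key : (1 + (1 - s) / (1 + s)) / (1 - (1 - s) / (1 + s)) = s⁻¹ := by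
    rw [one_add_div hs, one_sub_div hs, div_div_div_cancel_right₀ hs]
    ring
  rw [artanh, key, Real.log_inv]
  ring

lemma sinh_neg_log_div_two_sq {s : ℝ} (hs : 0 < s) :
    Real.sinh (-Real.log s / 2) ^ 2 = (s - 1) ^ 2 / (4 * s) := by
  have hcosh : Real.cosh (2 * (-Real.log s / 2)) = (s + s⁻¹) / 2 := by
    rw [show 2 * (-Real.log s / 2) = -Real.log s by ring, Real.cosh_neg, Real.cosh_log hs]
  rw [Real.cosh_two_mul, Real.cosh_sq] at hcosh
  field_simp at hcosh ⊢
  linear_combination hcosh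

lemma hasDerivAt_integral_artanh_one_sub_div_one_add {f : ℝ → ℝ} (hf : Continuous f) {s : ℝ}
    (hs : 0 < s) :
    HasDerivAt (fun s => ∫ θ in (0 : ℝ)..artanh ((1 - s) / (1 + s)), f θ)
      (-f (-Real.log s / 2) / (2 * s)) s := by
  have hlog : HasDerivAt (fun s => -Real.log s / 2) (-s⁻¹ / 2) s :=
    (Real.hasDerivAt_log hs.ne').neg.div_const 2
  have hcomp : HasDerivAt (fun s => ∫ θ in (0 : ℝ)..(-Real.log s / 2), f θ)
      (f (-Real.log s / 2) * (-s⁻¹ / 2)) s :=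
    (hf.integral_hasStrictDerivAt 0 _).hasDerivAt.comp s hlog
  rw [show -f (-Real.log s / 2) / (2 * s) = f (-Real.log s / 2) * (-s⁻¹ / 2) by ring]
  refine hcomp.congr_of_eventuallyEq ?_
  filter_upwards [Ioi_mem_nhds hs] with s' hs'
  rw [artanh_one_sub_div_one_add (by linarith [Set.mem_Ioi.mp hs'])]

lemma wirtinger_deriv_comp_normSq {h : ℝ → ℝ} {h' x y : ℝ}
    (hh : HasDerivAt h h' (x ^ 2 + y ^ 2)) :
    (1 / 2 : ℂ) * (((deriv (fun x' : ℝ => h (x' ^ 2 + y ^ 2)) x : ℝ) : ℂ)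
        - Complex.I * ((deriv (fun y' : ℝ => h (x ^ 2 + y' ^ 2)) y : ℝ) : ℂ))
      = h' * (starRingEnd ℂ) ((x : ℂ) + (y : ℂ) * Complex.I) := by
  have hx : HasDerivAt (fun x' : ℝ => h (x' ^ 2 + y ^ 2)) (h' * (2 * x)) x :=
    hh.comp x (by simpa using (hasDerivAt_pow 2 x).add_const (y ^ 2))
  have hy : HasDerivAt (fun y' : ℝ => h (x ^ 2 + y' ^ 2)) (h' * (2 * y)) y :=
    hh.comp y (by simpa using (hasDerivAt_pow 2 y).const_add (x ^ 2))
  rw [hx.deriv, hy.deriv, map_add, map_mul, Complex.conj_ofReal, Complex.conj_ofReal,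
    Complex.conj_I]
  push_cast
  ring

theorem stmt_14_general (k : ℕ) (hk : 1 ≤ k) (x y : ℝ) (h0 : 0 < x ^ 2 + y ^ 2) :
    (1 / 2 : ℂ) * (((deriv (fun x' : ℝ => gfun k x' y) x : ℝ) : ℂ)
        - Complex.I * ((deriv (fun y' : ℝ => gfun k x y') y : ℝ) : ℂ))
      = -(((x ^ 2 + y ^ 2 - 1 : ℝ) : ℂ) ^ (2 * k - 2))
          / (2 ^ (2 * k - 1) * ((x : ℂ) + (y : ℂ) * Complex.I) ^ k
              * (starRingEnd ℂ) ((x : ℂ) + (y : ℂ) * Complex.I) ^ (k - 1)) := by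
  obtain ⟨m, rfl⟩ := Nat.exists_eq_add_of_le' hk
  have hg : ∀ x' y', gfun (m + 1) x' y' =
      ∫ θ in (0 : ℝ)..artanh ((1 - (x' ^ 2 + y' ^ 2)) / (1 + (x' ^ 2 + y' ^ 2))),
        Real.sinh θ ^ (2 * m) := by
    intro x' y'
    simp only [gfun, sub_sub, add_assoc, show 2 * (m + 1) - 2 = 2 * m by omega]
  simp only [hg]
  rw [wirtinger_deriv_comp_normSq
      (hasDerivAt_integral_artanh_one_sub_div_one_add (by fun_prop) h0),
    pow_mul, sinh_neg_log_div_two_sq h0, show 2 * (m + 1) - 2 = 2 * m by omega,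
    show 2 * (m + 1) - 1 = 2 * m + 1 by omega, Nat.add_sub_cancel]
  push_cast
  generalize hz : (x : ℂ) + (y : ℂ) * Complex.I = z
  have hnormSq : (x : ℂ) ^ 2 + (y : ℂ) ^ 2 = z * (starRingEnd ℂ) z := by
    rw [← hz, map_add, map_mul, Complex.conj_ofReal, Complex.conj_ofReal, Complex.conj_I]
    linear_combination (y : ℂ) ^ 2 * Complex.I_sq
  have hz₀ : z * (starRingEnd ℂ) z ≠ 0 := by
    rw [← hnormSq]
    exact_mod_cast h0.ne'
  have hz₁ : z ≠ 0 := left_ne_zero_of_mul hz₀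
  have hz₂ : (starRingEnd ℂ) z ≠ 0 := right_ne_zero_of_mul hz₀
  rw [hnormSq, div_pow, ← pow_mul, mul_pow,
    show (4 : ℂ) ^ m = 2 ^ (2 * m) by rw [pow_mul]; norm_num]
  field_simp
  ring

/-- For an integer `k ≥ 1` and `(x,y)` with `0 < x² + y² < 1`, writing
`z = x + iy`, the Wirtinger derivative satisfies
`(1/2)(∂g/∂x − i ∂g/∂y) = −(x²+y²−1)^{2k−2}/(2^{2k−1} z^k conj(z)^{k−1})`. -/
theorem stmt_14 (k : ℕ) (hk : 1 ≤ k) (x y : ℝ) (h0 : 0 < x ^ 2 + y ^ 2)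
    (h1 : x ^ 2 + y ^ 2 < 1) :
    (1 / 2 : ℂ) * (((deriv (fun x' : ℝ => gfun k x' y) x : ℝ) : ℂ)
        - Complex.I * ((deriv (fun y' : ℝ => gfun k x y') y : ℝ) : ℂ))
      = -(((x ^ 2 + y ^ 2 - 1 : ℝ) : ℂ) ^ (2 * k - 2))
          / (2 ^ (2 * k - 1) * ((x : ℂ) + (y : ℂ) * Complex.I) ^ k
              * (starRingEnd ℂ) ((x : ℂ) + (y : ℂ) * Complex.I) ^ (k - 1)) :=
  stmt_14_general k hk x y h0
end

section
/- Let k ≥ 2 and n be integers, and let z, 𝔷 be points of the upper half-plane such that either n ≥ 0, or z does not lie in the SL₂(ℤ)-orbit of 𝔷. Then the family indexed by M = [[α,β],[γ,δ]] ∈ SL₂(ℤ) with terms (γz + δ)^{−2k} · (M·z − conj(𝔷))^{−2k} · X_𝔷(M·z)^n is summable (i.e., the series ∑_{M ∈ SL₂(ℤ)} |(γz+δ)^{−2k} (M·z − conj(𝔷))^{−2k} X_𝔷(M·z)^n| converges), where M·z = (αz+β)/(γz+δ) and X_𝔷(w) := (w − 𝔷)/(w − conj(𝔷)). -/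
/-!
Index `g ∈ SL₂(ℤ)` by its bottom row `(γ, δ)` and `t = round (Re (g • z) - Re ζ)`; this is injective
because matrices with the same bottom row differ by a power of `T`, which shifts `Re (g • z)` by an
integer. Now `|γz + δ| ≥ r(z) ‖(γ, δ)‖`, and `|g • z - conj ζ|` is at least both `Im ζ` and
`|t| - 1/2`, so the summand without `X_ζ` is dominated by `‖(γ, δ)‖^(-2k) (1 + |t|)^(-2k)`, which is
summable over `ℤ² × ℤ` once `2k > 2`.
Finally `|X_ζ(g • z)| < 1`, and `|X_ζ(g • z)| < 1/2` forces `|γz + δ|` and `|g • z - conj ζ|` to be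
bounded, which by the summability just proved happens for only finitely many `g`; so
`|X_ζ(g • z)|⁻¹` is bounded as well, and `|X_ζ(g • z)| ^ n` is bounded for every `n`.
-/

/-- The Möbius action of `M = [[α,β],[γ,δ]] ∈ SL₂(ℤ)` on a complex number `z`,
`M·z = (αz+β)/(γz+δ)`. -/
noncomputable def moebius (g : Matrix.SpecialLinearGroup (Fin 2) ℤ) (z : ℂ) : ℂ :=
  (((g.1 0 0 : ℤ) : ℂ) * z + ((g.1 0 1 : ℤ) : ℂ)) / (((g.1 1 0 : ℤ) : ℂ) * z + ((g.1 1 1 : ℤ) : ℂ))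

/-- The automorphy factor `γz + δ` for `M = [[α,β],[γ,δ]] ∈ SL₂(ℤ)`. -/
noncomputable def denomSL (g : Matrix.SpecialLinearGroup (Fin 2) ℤ) (z : ℂ) : ℂ :=
  ((g.1 1 0 : ℤ) : ℂ) * z + ((g.1 1 1 : ℤ) : ℂ)

open UpperHalfPlane Matrix MatrixGroups ModularGroup ComplexConjugate

lemma ModularGroup.eq_T_zpow_of_row_one {u : SL(2, ℤ)} (h0 : u 1 0 = 0) (h1 : u 1 1 = 1) :
    u = T ^ u 0 1 := by
  have hdet := u.det_coe
  rw [det_fin_two, h0, h1] at hdet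
  ext i j
  fin_cases i <;> fin_cases j <;> simp [coe_T_zpow, h0, h1]
  linarith

lemma ModularGroup.exists_eq_T_zpow_mul_of_row_one_eq {g h : SL(2, ℤ)} (hgh : g 1 = h 1) :
    ∃ n : ℤ, g = T ^ n * h := by
  have hdet := h.det_coe
  rw [det_fin_two] at hdet
  have h0 : (g * h⁻¹) 1 0 = 0 := by
    simp [mul_apply, Fin.sum_univ_two, adjugate_fin_two, hgh]; ring
  have h1 : (g * h⁻¹) 1 1 = 1 := by
    simp [mul_apply, Fin.sum_univ_two, adjugate_fin_two, hgh]; linarith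
  exact ⟨_, mul_inv_eq_iff_eq_mul.1 (eq_T_zpow_of_row_one h0 h1)⟩

lemma ModularGroup.injective_row_one_round_re_smul (z : ℍ) (c : ℝ) :
    Function.Injective fun g : SL(2, ℤ) => (g 1, round ((g • z).re - c)) := by
  intro g h hgh
  simp only [Prod.mk.injEq] at hgh
  obtain ⟨n, rfl⟩ := exists_eq_T_zpow_mul_of_row_one_eq hgh.1
  rw [mul_smul, re_T_zpow_smul, add_sub_right_comm, round_add_intCast] at hgh
  simp [add_eq_left.1 hgh.2]

namespace UpperHalfPlane

lemma im_le_norm_sub_conj (w ζ : ℍ) : ζ.im ≤ ‖(w : ℂ) - conj (ζ : ℂ)‖ := by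
  refine le_trans ?_ (Complex.abs_im_le_norm _)
  simp only [Complex.sub_im, Complex.conj_im, coe_im, sub_neg_eq_add]
  linarith [w.im_pos, le_abs_self (w.im + ζ.im)]

lemma abs_re_sub_le_norm_sub_conj (w ζ : ℍ) : |w.re - ζ.re| ≤ ‖(w : ℂ) - conj (ζ : ℂ)‖ := by
  simpa using Complex.abs_re_le_norm ((w : ℂ) - conj (ζ : ℂ))

lemma norm_sub_lt_norm_sub_conj (w ζ : ℍ) :
    ‖(w : ℂ) - ζ‖ < ‖(w : ℂ) - conj (ζ : ℂ)‖ := by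
  rw [← sq_lt_sq₀ (norm_nonneg _) (norm_nonneg _), Complex.sq_norm, Complex.sq_norm,
    Complex.normSq_apply, Complex.normSq_apply]
  simp only [Complex.sub_re, Complex.sub_im, Complex.conj_re, Complex.conj_im, coe_re, coe_im]
  nlinarith [w.im_pos, ζ.im_pos]

lemma im_lt_and_norm_sub_conj_lt (w ζ : ℍ) (h : 2 * ‖(w : ℂ) - ζ‖ < ‖(w : ℂ) - conj (ζ : ℂ)‖) :
    ζ.im < 3 * w.im ∧ ‖(w : ℂ) - conj (ζ : ℂ)‖ < 4 * ζ.im := by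
  constructor
  · have h2 := (sq_lt_sq₀ (by positivity) (norm_nonneg _)).2 h
    rw [mul_pow, Complex.sq_norm, Complex.sq_norm, Complex.normSq_apply, Complex.normSq_apply] at h2
    simp only [Complex.sub_re, Complex.sub_im, Complex.conj_re, Complex.conj_im, coe_re,
      coe_im] at h2
    nlinarith [w.im_pos, ζ.im_pos]
  · have htri := norm_sub_le_norm_sub_add_norm_sub (w : ℂ) ζ (conj (ζ : ℂ))
    rw [Complex.sub_conj, coe_im, norm_mul, Complex.norm_I, Complex.norm_real,
      Real.norm_of_nonneg (by linarith [ζ.im_pos])] at htri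
    linarith [ζ.im_pos]

end UpperHalfPlane

lemma mul_one_add_abs_round_le {v a x : ℝ} (hv : 0 ≤ v) (hva : v ≤ a) (hxa : |x| ≤ a) :
    2 * v * (1 + |(round x : ℝ)|) ≤ (2 * v + 3) * a := by
  have h1 : |(round x : ℝ)| ≤ |x| + 1 / 2 := by
    have := abs_sub_round x
    have := abs_sub_abs_le_abs_sub (round x : ℝ) x
    rw [abs_sub_comm] at this
    linarith
  nlinarith

lemma summable_inv_one_add_abs_pow {p : ℕ} (hp : 1 < p) :
    Summable fun t : ℤ => ((1 + |(t : ℝ)|) ^ p)⁻¹ := by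
  have h : Summable fun n : ℕ => ((1 + (n : ℝ)) ^ p)⁻¹ := by
    simpa [add_comm] using (summable_nat_add_iff 1).2 (Real.summable_nat_pow_inv.2 hp)
  rw [summable_int_iff_summable_nat_and_neg]
  exact ⟨by simpa using h, by simpa using h⟩

lemma summable_inv_norm_pow {p : ℕ} (hp : 2 < p) : Summable fun x : Fin 2 → ℤ => (‖x‖ ^ p)⁻¹ := by
  simpa [Real.rpow_neg (norm_nonneg _)] using
    EisensteinSeries.summable_one_div_norm_rpow (k := p) (by exact_mod_cast hp)

lemma Summable.bddAbove_range_inv {ι : Type*} {f g : ι → ℝ} (hf : Summable f) {ε δ : ℝ}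
    (hε : 0 < ε) (hδ : 0 < δ) (h : ∀ i, g i < ε → δ ≤ f i) :
    BddAbove (Set.range fun i => (g i)⁻¹) := by
  have hfin : {i | g i < ε}.Finite :=
    (Filter.eventually_cofinite.1 (hf.tendsto_cofinite_zero.eventually_lt_const hδ)).subset
      fun i hi => not_lt.2 (h i hi)
  obtain ⟨C, hC⟩ := (hfin.image fun i => (g i)⁻¹).bddAbove
  refine ⟨max C ε⁻¹, ?_⟩
  rintro _ ⟨i, rfl⟩
  by_cases hi : g i < ε
  · exact le_max_of_le_left (hC ⟨i, hi, rfl⟩)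
  · exact le_max_of_le_right (inv_anti₀ hε (not_lt.1 hi))

-- The norm of `((· - conj ζ) ^ (-2k)) ∣[2k] g` at `z`, the summand of `Ψ_{2k,0}(z, ζ)`.
noncomputable def kernelNorm (k : ℕ) (z ζ : ℍ) (g : SL(2, ℤ)) : ℝ :=
  ((‖denom g z‖ * ‖(↑(g • z) : ℂ) - conj (ζ : ℂ)‖) ^ (2 * k))⁻¹

lemma mul_le_norm_denom_mul_norm_sub_conj (z ζ : ℍ) (g : SL(2, ℤ)) :
    EisensteinSeries.r z * (2 * ζ.im / (2 * ζ.im + 3)) *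
        (‖g 1‖ * (1 + |(round ((g • z).re - ζ.re) : ℝ)|)) ≤
      ‖denom g z‖ * ‖(↑(g • z) : ℂ) - conj (ζ : ℂ)‖ := by
  have hj : EisensteinSeries.r z * ‖g 1‖ ≤ ‖denom g z‖ :=
    EisensteinSeries.r_mul_max_le z (SpecialLinearGroup.row_ne_zero g 1)
  have hA : 2 * ζ.im / (2 * ζ.im + 3) * (1 + |(round ((g • z).re - ζ.re) : ℝ)|) ≤
      ‖(↑(g • z) : ℂ) - conj (ζ : ℂ)‖ := by
    rw [div_mul_eq_mul_div, div_le_iff₀ (by linarith [ζ.im_pos]), mul_comm _ (2 * ζ.im + 3)]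
    exact mul_one_add_abs_round_le ζ.im_pos.le (im_le_norm_sub_conj _ _)
      (abs_re_sub_le_norm_sub_conj _ _)
  calc _ = (EisensteinSeries.r z * ‖g 1‖) *
        (2 * ζ.im / (2 * ζ.im + 3) * (1 + |(round ((g • z).re - ζ.re) : ℝ)|)) := by ring
    _ ≤ _ := mul_le_mul hj hA (by have := ζ.im_pos; positivity) (norm_nonneg _)

lemma summable_kernelNorm {k : ℕ} (hk : 2 ≤ k) (z ζ : ℍ) : Summable (kernelNorm k z ζ) := by
  set c := EisensteinSeries.r z * (2 * ζ.im / (2 * ζ.im + 3))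
  have hc : 0 < c := by have := EisensteinSeries.r_pos z; have := ζ.im_pos; positivity
  have hsum : Summable fun p : (Fin 2 → ℤ) × ℤ =>
      (c ^ (2 * k))⁻¹ * ((‖p.1‖ ^ (2 * k))⁻¹ * ((1 + |(p.2 : ℝ)|) ^ (2 * k))⁻¹) :=
    ((summable_inv_norm_pow (by omega)).mul_of_nonneg (summable_inv_one_add_abs_pow (by omega))
      (fun _ => by positivity) (fun _ => by positivity)).mul_left _
  refine (hsum.comp_injective (injective_row_one_round_re_smul z ζ.re)).of_nonneg_of_le
    (fun _ => by unfold kernelNorm; positivity) fun g => ?_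
  have hb : 0 < ‖g 1‖ := norm_pos_iff.2 (SpecialLinearGroup.row_ne_zero g 1)
  calc kernelNorm k z ζ g ≤ ((c * (‖g 1‖ * (1 + |(round ((g • z).re - ζ.re) : ℝ)|))) ^ (2 * k))⁻¹ :=
        inv_anti₀ (by positivity) (pow_le_pow_left₀ (by positivity)
          (mul_le_norm_denom_mul_norm_sub_conj z ζ g) _)
    _ = _ := by simp only [Function.comp_apply, mul_pow, mul_inv]

noncomputable def ellipticX (ζ w : ℂ) : ℂ := (w - ζ) / (w - conj ζ)

lemma norm_ellipticX_lt_one (ζ w : ℍ) : ‖ellipticX ζ w‖ < 1 := by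
  rw [ellipticX, norm_div, div_lt_one (ζ.im_pos.trans_le (im_le_norm_sub_conj w ζ))]
  exact norm_sub_lt_norm_sub_conj w ζ

lemma inv_pow_le_kernelNorm_of_norm_ellipticX_lt_half (k : ℕ) (z ζ : ℍ) (g : SL(2, ℤ))
    (h : ‖ellipticX ζ ↑(g • z)‖ < 1 / 2) : ((48 * ζ.im * z.im) ^ k)⁻¹ ≤ kernelNorm k z ζ g := by
  set A := ‖(↑(g • z) : ℂ) - conj (ζ : ℂ)‖
  set N := Complex.normSq (denom g z)
  have hA0 : 0 < A := ζ.im_pos.trans_le (im_le_norm_sub_conj _ _)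
  rw [ellipticX, norm_div, div_lt_iff₀ hA0] at h
  obtain ⟨him, hA⟩ := im_lt_and_norm_sub_conj_lt (g • z) ζ (by linarith)
  have hN : 0 ≤ N := Complex.normSq_nonneg _
  have hj : N * (g • z).im = z.im := by
    rw [ModularGroup.im_smul_eq_div_normSq,
      mul_div_cancel₀ _ (Complex.normSq_pos.2 (denom_ne_zero g z)).ne']
  have hv := ζ.im_pos
  have hsq : (‖denom g z‖ * A) ^ 2 ≤ 48 * ζ.im * z.im := by
    have hA2 : A ^ 2 ≤ 16 * ζ.im ^ 2 := by nlinarith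
    calc (‖denom g z‖ * A) ^ 2 = N * A ^ 2 := by rw [mul_pow, Complex.sq_norm]
      _ ≤ N * (16 * ζ.im ^ 2) := mul_le_mul_of_nonneg_left hA2 hN
      _ = 16 * ζ.im * (N * ζ.im) := by ring
      _ ≤ 16 * ζ.im * (3 * z.im) := by
        refine mul_le_mul_of_nonneg_left ?_ (by positivity)
        calc N * ζ.im ≤ N * (3 * (g • z).im) := mul_le_mul_of_nonneg_left him.le hN
          _ = 3 * z.im := by rw [← hj]; ring
      _ = 48 * ζ.im * z.im := by ring
  have := norm_pos_iff.2 (denom_ne_zero g z)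
  rw [kernelNorm, pow_mul]
  exact inv_anti₀ (by positivity) (pow_le_pow_left₀ (by positivity) hsq k)

lemma exists_norm_ellipticX_zpow_le (n : ℤ) (z ζ : ℍ) :
    ∃ B, ∀ g : SL(2, ℤ), ‖ellipticX ζ ↑(g • z)‖ ^ n ≤ B := by
  obtain ⟨m, rfl | rfl⟩ := Int.eq_nat_or_neg n
  · exact ⟨1, fun g => by
      simpa using pow_le_one₀ (norm_nonneg _) (norm_ellipticX_lt_one ζ (g • z)).le⟩
  · obtain ⟨C, hC⟩ := (summable_kernelNorm le_rfl z ζ).bddAbove_range_inv one_half_pos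
      (by have := ζ.im_pos; have := z.im_pos; positivity)
      (inv_pow_le_kernelNorm_of_norm_ellipticX_lt_half 2 z ζ)
    refine ⟨C ^ m, fun g => ?_⟩
    rw [_root_.zpow_neg, zpow_natCast, ← inv_pow]
    exact pow_le_pow_left₀ (inv_nonneg.2 (norm_nonneg _)) (hC ⟨g, rfl⟩) m

lemma moebius_coe (g : SL(2, ℤ)) (z : ℍ) : moebius g z = ↑(g • z) := by
  rw [coe_specialLinearGroup_apply]
  simp [moebius]

lemma denomSL_coe (g : SL(2, ℤ)) (z : ℍ) : denomSL g z = denom g z := by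
  simp [denomSL, ModularGroup.denom_apply]

lemma norm_poincare_summand_eq (k : ℕ) (n : ℤ) (z ζ : ℍ) (g : SL(2, ℤ)) :
    ‖denomSL g (z : ℂ) ^ (-(2 * (k : ℤ)))
        * (moebius g (z : ℂ) - (starRingEnd ℂ) (ζ : ℂ)) ^ (-(2 * (k : ℤ)))
        * ((moebius g (z : ℂ) - (ζ : ℂ))
            / (moebius g (z : ℂ) - (starRingEnd ℂ) (ζ : ℂ))) ^ n‖ =
      kernelNorm k z ζ g * ‖ellipticX ζ ↑(g • z)‖ ^ n := by
  rw [moebius_coe, denomSL_coe, kernelNorm, ellipticX, norm_mul, norm_mul, norm_zpow, norm_zpow,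
    norm_zpow, ← mul_zpow, _root_.zpow_neg]
  norm_cast

theorem stmt_16_general (k : ℕ) (hk : 2 ≤ k) (n : ℤ) (z ζ : UpperHalfPlane) :
    Summable (fun g : Matrix.SpecialLinearGroup (Fin 2) ℤ =>
      ‖denomSL g (z : ℂ) ^ (-(2 * (k : ℤ)))
        * (moebius g (z : ℂ) - (starRingEnd ℂ) (ζ : ℂ)) ^ (-(2 * (k : ℤ)))
        * ((moebius g (z : ℂ) - (ζ : ℂ))
            / (moebius g (z : ℂ) - (starRingEnd ℂ) (ζ : ℂ))) ^ n‖) := by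
  obtain ⟨B, hB⟩ := exists_norm_ellipticX_zpow_le n z ζ
  refine ((summable_kernelNorm hk z ζ).mul_right B).of_nonneg_of_le (fun _ => norm_nonneg _)
    fun g => ?_
  rw [norm_poincare_summand_eq]
  exact mul_le_mul_of_nonneg_left (hB g) (by unfold kernelNorm; positivity)

/-- For integers `k ≥ 2`, `n`, and points `z, 𝔷` of the upper half-plane such
that either `n ≥ 0` or `z` is not in the `SL₂(ℤ)`-orbit of `𝔷`, the family
`(γz+δ)^{−2k} (M·z − conj 𝔷)^{−2k} X_𝔷(M·z)^n`, `M ∈ SL₂(ℤ)`, is absolutely summable. -/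
theorem stmt_16 (k : ℕ) (hk : 2 ≤ k) (n : ℤ) (z ζ : UpperHalfPlane)
    (h : 0 ≤ n ∨ ∀ g : Matrix.SpecialLinearGroup (Fin 2) ℤ, moebius g (z : ℂ) ≠ (ζ : ℂ)) :
    Summable (fun g : Matrix.SpecialLinearGroup (Fin 2) ℤ =>
      ‖denomSL g (z : ℂ) ^ (-(2 * (k : ℤ)))
        * (moebius g (z : ℂ) - (starRingEnd ℂ) (ζ : ℂ)) ^ (-(2 * (k : ℤ)))
        * ((moebius g (z : ℂ) - (ζ : ℂ))
            / (moebius g (z : ℂ) - (starRingEnd ℂ) (ζ : ℂ))) ^ n‖) :=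
  stmt_16_general k hk n z ζ
end

section
/- Let k ≥ 1 be an integer, M = [[α,β],[γ,δ]] ∈ SL₂(ℤ), and 𝔷 a point of the upper half-plane. Let f be a complex-valued function on the upper half-plane minus a discrete set, satisfying f(M·z) = (γz+δ)^{2k} f(z) wherever defined. Suppose there exist an integer N, coefficients a, b : ℤ → ℂ vanishing for indices below −N, and radii ε, ε' ∈ (0,1) such that f(z)·(z − conj(𝔷))^{2k} = ∑_{n ≥ −N} a(n)·X_𝔷(z)^n for all z with 0 < |X_𝔷(z)| < ε (the series converging absolutely), and f(z)·(z − conj(M·𝔷))^{2k} = ∑_{n ≥ −N} b(n)·X_{M·𝔷}(z)^n for all z with 0 < |X_{M·𝔷}(z)| < ε'. Then for every integer n, b(n) = (γ·conj(𝔷) + δ)^{−2k−n} · (γ𝔷 + δ)^{n} · a(n). -/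
/-!
For `0 < ‖q‖` small, the point `z = (𝔷 - q conj 𝔷) / (1 - q)` lies in `ℍ` and has
`X_𝔷(z) = q`. Since `M` has real entries, `X_{M𝔷}(Mz) = q c` with
`c = j(M, conj 𝔷) / j(M, 𝔷)` of modulus one, and
`f(Mz) (Mz - conj (M𝔷))^{2k} = f(z) (z - conj 𝔷)^{2k} / j(M, conj 𝔷)^{2k}`.
The two expansions therefore give two Laurent series in `q` that agree on a punctured disc,
namely `∑ a(n) qⁿ` and `∑ j(M, conj 𝔷)^{2k} cⁿ b(n) qⁿ`. Multiplied by `q^N` these are power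
series, so the identity theorem forces `a(n) = j(M, conj 𝔷)^{2k} cⁿ b(n)`.
-/

/-- `X_ϱ(z) = (z − ϱ)/(z − conj ϱ)`. -/
noncomputable def ellX (ϱ z : ℂ) : ℂ := (z - ϱ) / (z - (starRingEnd ℂ) ϱ)

open Filter Topology FormalMultilinearSeries ComplexConjugate

theorem tsum_int_eq_tsum_nat_sub {M : Type*} [AddCommMonoid M] [TopologicalSpace M]
    {g : ℤ → M} (N : ℕ) (hg : ∀ n < -(N : ℤ), g n = 0) :
    ∑' m : ℕ, g (m - N) = ∑' n, g n := by
  refine Function.Injective.tsum_eq (fun x y h => by simpa using h) fun n hn => ?_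
  have : -(N : ℤ) ≤ n := le_of_not_gt fun h => hn (hg n h)
  exact ⟨(n + N).toNat, by simp only; omega⟩

section LaurentSeries

variable {𝕜 : Type*} [NontriviallyNormedField 𝕜] [CompleteSpace 𝕜]

theorem eq_zero_of_powerSeries_eventually_eq_zero (c : ℕ → 𝕜) {q₀ : 𝕜} (hq₀ : q₀ ≠ 0)
    (hsum : Summable fun m => ‖c m‖ * ‖q₀‖ ^ m)
    (hzero : ∀ᶠ q in 𝓝[≠] 0, ∑' m, c m * q ^ m = 0) : c = 0 := by
  set p := ofScalars 𝕜 c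
  have hrad : 0 < p.radius :=
    lt_of_lt_of_le (by simpa using hq₀)
      (p.le_radius_of_summable (r := ‖q₀‖₊) (by simpa [p, ofScalars_norm] using hsum))
  have hp : HasFPowerSeriesAt p.sum p 0 := (p.hasFPowerSeriesOnBall hrad).hasFPowerSeriesAt
  have hp_sum : ∀ q, p.sum q = ∑' m, c m * q ^ m := fun q => by
    simp [FormalMultilinearSeries.sum, p, mul_comm]
  rcases hp.analyticAt.eventually_eq_zero_or_eventually_ne_zero with h | h
  · exact (ofScalars_series_eq_zero 𝕜).mp (hp.eq_zero_of_eventually h)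
  · simp_rw [hp_sum] at h
    exact (hzero.and h).exists.elim fun q hq => (hq.2 hq.1).elim

theorem eq_zero_of_laurentSeries_eq_zero (A : ℤ → 𝕜) (N : ℕ) (hA : ∀ n < -(N : ℤ), A n = 0)
    {r : ℝ} (hr : 0 < r)
    (hsum : ∀ q : 𝕜, 0 < ‖q‖ → ‖q‖ < r → Summable fun n => ‖A n * q ^ n‖)
    (hzero : ∀ q : 𝕜, 0 < ‖q‖ → ‖q‖ < r → ∑' n, A n * q ^ n = 0) : A = 0 := by
  have hshift : ∀ (q : 𝕜) (m : ℕ), q ≠ 0 →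
      A (m - N) * q ^ ((m : ℤ) - N) * q ^ N = A (m - N) * q ^ m := fun q m hq => by
    rw [mul_assoc, ← zpow_natCast q N, ← zpow_add₀ hq, sub_add_cancel, zpow_natCast]
  have hpow : (fun m : ℕ => A (m - N)) = 0 := by
    obtain ⟨q₀, hq₀, hq₀r⟩ := NormedField.exists_norm_lt 𝕜 hr
    refine eq_zero_of_powerSeries_eventually_eq_zero _ (norm_pos_iff.mp hq₀) ?_ ?_
    · have hinj : Function.Injective fun m : ℕ => (m : ℤ) - N := fun x y h => by simpa using h
      refine (((hsum q₀ hq₀ hq₀r).mul_right (‖q₀‖ ^ N)).comp_injective hinj).congr fun m => ?_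
      simp only [Function.comp, ← norm_pow, ← norm_mul, hshift q₀ m (norm_pos_iff.mp hq₀)]
    · filter_upwards [inter_mem_nhdsWithin _ (Metric.ball_mem_nhds 0 hr)] with q ⟨hq0, hqr⟩
      have hq0 : q ≠ 0 := hq0
      rw [mem_ball_zero_iff] at hqr
      rw [← tsum_congr fun m => hshift q m hq0, tsum_mul_right,
        tsum_int_eq_tsum_nat_sub N (g := fun n => A n * q ^ n) fun n hn => by simp [hA n hn],
        hzero q (norm_pos_iff.mpr hq0) hqr, zero_mul]
  funext n
  rcases lt_or_ge n (-(N : ℤ)) with h | h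
  · exact hA n h
  · have h' := congrFun hpow (n + N).toNat
    rwa [Pi.zero_apply, show ((n + N).toNat : ℤ) - N = n by omega] at h'

theorem eq_of_laurentSeries_eq {A B : ℤ → 𝕜} {N : ℕ} (hA : ∀ n < -(N : ℤ), A n = 0)
    (hB : ∀ n < -(N : ℤ), B n = 0) {r : ℝ} (hr : 0 < r)
    (h : ∀ q : 𝕜, 0 < ‖q‖ → ‖q‖ < r → Summable (fun n => ‖A n * q ^ n‖)
      ∧ Summable (fun n => ‖B n * q ^ n‖) ∧ ∑' n, A n * q ^ n = ∑' n, B n * q ^ n) :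
    A = B := by
  refine sub_eq_zero.mp (eq_zero_of_laurentSeries_eq_zero (A - B) N
    (fun n hn => by simp [hA n hn, hB n hn]) hr (fun q hq hqr => ?_) fun q hq hqr => ?_)
  · obtain ⟨hsA, hsB, -⟩ := h q hq hqr
    refine (hsA.add hsB).of_nonneg_of_le (fun _ => norm_nonneg _) fun n => ?_
    simpa only [Pi.sub_apply, sub_mul] using norm_sub_le _ _
  · obtain ⟨hsA, hsB, heq⟩ := h q hq hqr
    simp only [Pi.sub_apply, sub_mul]
    rw [hsA.of_norm.tsum_sub hsB.of_norm, heq, sub_self]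

end LaurentSeries

theorem exists_ellX_eq {ϱ q : ℂ} (hϱ : 0 < ϱ.im) (hq : ‖q‖ < 1) :
    ∃ z : ℂ, 0 < z.im ∧ ellX ϱ z = q := by
  have h1q : 1 - q ≠ 0 := sub_ne_zero.mpr fun h => by simp [← h] at hq
  have hϱ' : ϱ - conj ϱ ≠ 0 := fun h => by simp [Complex.ext_iff, hϱ.ne'] at h
  refine ⟨(ϱ - q * conj ϱ) / (1 - q), ?_, ?_⟩
  · have hnum : (ϱ - q * conj ϱ).im * (1 - q).re - (ϱ - q * conj ϱ).re * (1 - q).im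
        = ϱ.im * (1 - ‖q‖ ^ 2) := by
      simp only [Complex.sq_norm, Complex.normSq_apply, Complex.sub_re, Complex.sub_im,
        Complex.mul_re, Complex.mul_im, Complex.one_re, Complex.one_im, Complex.conj_re,
        Complex.conj_im]
      ring
    have hq2 : ‖q‖ ^ 2 < 1 := by nlinarith [norm_nonneg q]
    rw [Complex.div_im, ← sub_div, hnum]
    exact div_pos (mul_pos hϱ (by linarith)) (Complex.normSq_pos.mpr h1q)
  · have hsub : (ϱ - q * conj ϱ) / (1 - q) - conj ϱ = (ϱ - conj ϱ) / (1 - q) := by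
      field_simp
      ring
    rw [ellX, hsub]
    field_simp
    ring

section Moebius

variable {α β γ δ : ℤ}

theorem intCast_mul_add_ne_zero (hdet : α * δ - β * γ = 1) {z : ℂ} (hz : z.im ≠ 0) :
    (γ : ℂ) * z + δ ≠ 0 := by
  intro h
  have hγ : γ = 0 := by
    have him := congrArg Complex.im h
    simp only [Complex.add_im, Complex.mul_im, Complex.intCast_re, Complex.intCast_im, zero_mul,
      add_zero, Complex.zero_im, mul_eq_zero, hz, or_false] at him
    exact_mod_cast him
  have hδ : δ = 0 := by
    have hre := congrArg Complex.re h
    simp only [hγ, Int.cast_zero, zero_mul, zero_add, Complex.intCast_re, Complex.zero_re] at hre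
    exact_mod_cast hre
  simp [hγ, hδ] at hdet

theorem moebius_sub_moebius (hdet : α * δ - β * γ = 1) {u v : ℂ}
    (hu : (γ : ℂ) * u + δ ≠ 0) (hv : (γ : ℂ) * v + δ ≠ 0) :
    ((α : ℂ) * u + β) / ((γ : ℂ) * u + δ) - ((α : ℂ) * v + β) / ((γ : ℂ) * v + δ)
      = (u - v) / (((γ : ℂ) * u + δ) * ((γ : ℂ) * v + δ)) := by
  have hdetC : (α : ℂ) * δ - β * γ = 1 := by exact_mod_cast hdet
  rw [div_sub_div _ _ hu hv]
  congr 1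
  linear_combination (u - v) * hdetC

theorem moebius_sub_conj_moebius (hdet : α * δ - β * γ = 1) {ϱ z : ℂ} (hϱ : ϱ.im ≠ 0)
    (hz : z.im ≠ 0) :
    ((α : ℂ) * z + β) / ((γ : ℂ) * z + δ) - conj (((α : ℂ) * ϱ + β) / ((γ : ℂ) * ϱ + δ))
      = (z - conj ϱ) / (((γ : ℂ) * z + δ) * ((γ : ℂ) * conj ϱ + δ)) := by
  have hconj : conj (((α : ℂ) * ϱ + β) / ((γ : ℂ) * ϱ + δ))
      = ((α : ℂ) * conj ϱ + β) / ((γ : ℂ) * conj ϱ + δ) := by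
    simp [map_div₀]
  rw [hconj, moebius_sub_moebius hdet (intCast_mul_add_ne_zero hdet hz)
    (intCast_mul_add_ne_zero hdet (by simpa using hϱ))]

theorem ellX_moebius (hdet : α * δ - β * γ = 1) {ϱ z : ℂ} (hϱ : ϱ.im ≠ 0) (hz : z.im ≠ 0) :
    ellX (((α : ℂ) * ϱ + β) / ((γ : ℂ) * ϱ + δ)) (((α : ℂ) * z + β) / ((γ : ℂ) * z + δ))
      = ellX ϱ z * (((γ : ℂ) * conj ϱ + δ) / ((γ : ℂ) * ϱ + δ)) := by
  have hjz := intCast_mul_add_ne_zero hdet hz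
  rw [ellX, moebius_sub_conj_moebius hdet hϱ hz,
    moebius_sub_moebius hdet hjz (intCast_mul_add_ne_zero hdet hϱ), ellX, div_div_div_eq,
    div_mul_div_comm,
    show (z - ϱ) * (((γ : ℂ) * z + δ) * ((γ : ℂ) * conj ϱ + δ))
      = ((γ : ℂ) * z + δ) * ((z - ϱ) * ((γ : ℂ) * conj ϱ + δ)) by ring,
    show ((γ : ℂ) * z + δ) * ((γ : ℂ) * ϱ + δ) * (z - conj ϱ)
      = ((γ : ℂ) * z + δ) * ((z - conj ϱ) * ((γ : ℂ) * ϱ + δ)) by ring,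
    mul_div_mul_left _ _ hjz]

theorem mul_pow_sub_conj_moebius (hdet : α * δ - β * γ = 1) {ϱ z : ℂ} (hϱ : ϱ.im ≠ 0)
    (hz : z.im ≠ 0) (f : ℂ → ℂ) (m : ℕ)
    (hf : f (((α : ℂ) * z + β) / ((γ : ℂ) * z + δ)) = ((γ : ℂ) * z + δ) ^ m * f z) :
    f (((α : ℂ) * z + β) / ((γ : ℂ) * z + δ))
        * (((α : ℂ) * z + β) / ((γ : ℂ) * z + δ)
          - conj (((α : ℂ) * ϱ + β) / ((γ : ℂ) * ϱ + δ))) ^ m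
      = f z * (z - conj ϱ) ^ m / ((γ : ℂ) * conj ϱ + δ) ^ m := by
  have hjz := intCast_mul_add_ne_zero hdet hz
  rw [hf, moebius_sub_conj_moebius hdet hϱ hz, div_pow, mul_pow]
  field_simp

end Moebius

theorem stmt_18_general (k : ℕ) (α β γ δ : ℤ) (hdet : α * δ - β * γ = 1)
    (ζ : UpperHalfPlane) (f : ℂ → ℂ)
    (hmod : ∀ z : ℂ, 0 < z.im →
        f (((α : ℂ) * z + (β : ℂ)) / ((γ : ℂ) * z + (δ : ℂ)))
          = ((γ : ℂ) * z + (δ : ℂ)) ^ (2 * k) * f z)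
    (N : ℕ) (a b : ℤ → ℂ)
    (ha0 : ∀ n : ℤ, n < -(N : ℤ) → a n = 0) (hb0 : ∀ n : ℤ, n < -(N : ℤ) → b n = 0)
    (ε ε' : ℝ) (hε0 : 0 < ε) (hε'0 : 0 < ε')
    (hexpa : ∀ z : ℂ, 0 < ‖ellX (ζ : ℂ) z‖ → ‖ellX (ζ : ℂ) z‖ < ε →
        Summable (fun n : ℤ => ‖a n * ellX (ζ : ℂ) z ^ n‖)
        ∧ f z * (z - (starRingEnd ℂ) (ζ : ℂ)) ^ (2 * k)
            = ∑' n : ℤ, a n * ellX (ζ : ℂ) z ^ n)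
    (hexpb : ∀ z : ℂ,
        0 < ‖ellX (((α : ℂ) * (ζ : ℂ) + (β : ℂ))
            / ((γ : ℂ) * (ζ : ℂ) + (δ : ℂ))) z‖ →
        ‖ellX (((α : ℂ) * (ζ : ℂ) + (β : ℂ))
            / ((γ : ℂ) * (ζ : ℂ) + (δ : ℂ))) z‖ < ε' →
        Summable (fun n : ℤ => ‖b n
            * ellX (((α : ℂ) * (ζ : ℂ) + (β : ℂ)) / ((γ : ℂ) * (ζ : ℂ) + (δ : ℂ))) z ^ n‖)
        ∧ f z * (z - (starRingEnd ℂ) (((α : ℂ) * (ζ : ℂ) + (β : ℂ))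
              / ((γ : ℂ) * (ζ : ℂ) + (δ : ℂ)))) ^ (2 * k)
            = ∑' n : ℤ, b n
                * ellX (((α : ℂ) * (ζ : ℂ) + (β : ℂ)) / ((γ : ℂ) * (ζ : ℂ) + (δ : ℂ))) z ^ n) :
    ∀ n : ℤ,
      b n = ((γ : ℂ) * (starRingEnd ℂ) (ζ : ℂ) + (δ : ℂ)) ^ (-(2 * (k : ℤ)) - n)
          * ((γ : ℂ) * (ζ : ℂ) + (δ : ℂ)) ^ n * a n := by
  have hϱ : (ζ : ℂ).im ≠ 0 := ζ.im_pos.ne'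
  set w : ℂ := (γ : ℂ) * ζ + δ
  set w' : ℂ := (γ : ℂ) * conj (ζ : ℂ) + δ
  have hw : w ≠ 0 := intCast_mul_add_ne_zero hdet hϱ
  have hw' : w' ≠ 0 := intCast_mul_add_ne_zero hdet (by simpa using hϱ)
  have hc : ‖w' / w‖ = 1 := by
    rw [show w' = conj w by simp [w, w'], norm_div, Complex.norm_conj,
      div_self (norm_ne_zero_iff.mpr hw)]
  have hcoeff : a = fun n => w' ^ (2 * k) * ((w' / w) ^ n * b n) := by
    refine eq_of_laurentSeries_eq ha0 (fun n hn => by simp [hb0 n hn])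
      (lt_min hε0 (lt_min hε'0 one_pos)) fun q hq0 hqr => ?_
    obtain ⟨hqε, hqε', hq1⟩ : ‖q‖ < ε ∧ ‖q‖ < ε' ∧ ‖q‖ < 1 := by simpa using hqr
    obtain ⟨z, hz, rfl⟩ := exists_ellX_eq ζ.im_pos hq1
    have hXM : ellX ((α * ζ + β) / w) ((α * z + β) / (γ * z + δ)) = ellX ζ z * (w' / w) :=
      ellX_moebius hdet hϱ hz.ne'
    have hXM_norm : ‖ellX ((α * ζ + β) / w) ((α * z + β) / (γ * z + δ))‖ = ‖ellX ζ z‖ := by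
      rw [hXM, norm_mul, hc, mul_one]
    obtain ⟨hsa, hea⟩ := hexpa z hq0 hqε
    obtain ⟨hsb, heb⟩ := hexpb _ (hXM_norm ▸ hq0) (hXM_norm ▸ hqε')
    rw [hXM] at hsb heb
    rw [mul_pow_sub_conj_moebius hdet hϱ hz.ne' f _ (hmod z hz), hea,
      div_eq_iff (pow_ne_zero _ hw'), ← tsum_mul_right] at heb
    refine ⟨hsa, (hsb.mul_left ‖w' ^ (2 * k)‖).congr fun n => ?_, heb.trans ?_⟩
    · rw [← norm_mul, mul_zpow]
      ring_nf
    · exact tsum_congr fun n => by rw [mul_zpow]; ring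
  intro n
  rw [congrFun hcoeff n, div_zpow,
    show -(2 * (k : ℤ)) - n = -((2 * k : ℕ) : ℤ) + -n by push_cast; ring,
    zpow_add₀ hw', zpow_neg, zpow_neg, zpow_natCast]
  field_simp

/-- Let `k ≥ 1`, `M = [[α,β],[γ,δ]] ∈ SL₂(ℤ)`, `𝔷 ∈ ℍ`, and let `f` satisfy
`f(M·z) = (γz+δ)^{2k} f(z)` on the upper half-plane. If `f(z)(z − conj 𝔷)^{2k}
= ∑_{n ≥ −N} a(n) X_𝔷(z)^n` on a punctured disc `0 < |X_𝔷(z)| < ε` (absolutely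
convergent), and similarly with `M·𝔷`, `b(n)`, `ε'`, then for every `n`:
`b(n) = (γ conj(𝔷) + δ)^{−2k−n} (γ𝔷 + δ)^n a(n)`. -/
theorem stmt_18 (k : ℕ) (hk : 1 ≤ k) (α β γ δ : ℤ) (hdet : α * δ - β * γ = 1)
    (ζ : UpperHalfPlane) (f : ℂ → ℂ)
    (hmod : ∀ z : ℂ, 0 < z.im →
        f (((α : ℂ) * z + (β : ℂ)) / ((γ : ℂ) * z + (δ : ℂ)))
          = ((γ : ℂ) * z + (δ : ℂ)) ^ (2 * k) * f z)
    (N : ℕ) (a b : ℤ → ℂ)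
    (ha0 : ∀ n : ℤ, n < -(N : ℤ) → a n = 0) (hb0 : ∀ n : ℤ, n < -(N : ℤ) → b n = 0)
    (ε ε' : ℝ) (hε0 : 0 < ε) (hε1 : ε < 1) (hε'0 : 0 < ε') (hε'1 : ε' < 1)
    (hexpa : ∀ z : ℂ, 0 < ‖ellX (ζ : ℂ) z‖ → ‖ellX (ζ : ℂ) z‖ < ε →
        Summable (fun n : ℤ => ‖a n * ellX (ζ : ℂ) z ^ n‖)
        ∧ f z * (z - (starRingEnd ℂ) (ζ : ℂ)) ^ (2 * k)
            = ∑' n : ℤ, a n * ellX (ζ : ℂ) z ^ n)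
    (hexpb : ∀ z : ℂ,
        0 < ‖ellX (((α : ℂ) * (ζ : ℂ) + (β : ℂ))
            / ((γ : ℂ) * (ζ : ℂ) + (δ : ℂ))) z‖ →
        ‖ellX (((α : ℂ) * (ζ : ℂ) + (β : ℂ))
            / ((γ : ℂ) * (ζ : ℂ) + (δ : ℂ))) z‖ < ε' →
        Summable (fun n : ℤ => ‖b n
            * ellX (((α : ℂ) * (ζ : ℂ) + (β : ℂ)) / ((γ : ℂ) * (ζ : ℂ) + (δ : ℂ))) z ^ n‖)
        ∧ f z * (z - (starRingEnd ℂ) (((α : ℂ) * (ζ : ℂ) + (β : ℂ))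
              / ((γ : ℂ) * (ζ : ℂ) + (δ : ℂ)))) ^ (2 * k)
            = ∑' n : ℤ, b n
                * ellX (((α : ℂ) * (ζ : ℂ) + (β : ℂ)) / ((γ : ℂ) * (ζ : ℂ) + (δ : ℂ))) z ^ n) :
    ∀ n : ℤ,
      b n = ((γ : ℂ) * (starRingEnd ℂ) (ζ : ℂ) + (δ : ℂ)) ^ (-(2 * (k : ℤ)) - n)
          * ((γ : ℂ) * (ζ : ℂ) + (δ : ℂ)) ^ n * a n :=
  stmt_18_general k α β γ δ hdet ζ f hmod N a b ha0 hb0 ε ε' hε0 hε'0 hexpa hexpb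
end
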